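/- arXiv:1305.1965 — 3 statements merged into one kernel-verified Lean document; each statement's English description precedes it below -/
import Mathlib

section
/- Let R be a unital associative ring and let A = [[1,1,1],[1,a,b],[1,c,d]] be a 3×3 matrix over R. Then all 1×1 and 2×2 submatrices of A are invertible if and only if the thirteen elements a, b, c, d, a−1, b−1, c−1, d−1, d−c, d−b, c−a, b−a and db⁻¹ − ca⁻¹ are invertible in R. Furthermore, if all 1×1 and 2×2 submatrices of A are invertible, then: A is invertible if and only if (d−c)⁻¹(c−1) − (b−a)⁻¹(a−1) is invertible in R; and J₂(A) is invertible if and only if (c−1)(d−c)⁻¹d − (a−1)(b−a)⁻¹b is invertible in R. -/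
open Matrix

section KontsevichDefs

variable {R : Type*} [Ring R]

/-- `J₂`: the transposed Hadamard inverse, `J₂(M)_{jk} = (M_{kj})⁻¹`
(with `Ring.inverse`, which is the two-sided inverse on units and `0` elsewhere). -/
noncomputable def J2 {m : Type*} (M : Matrix m m R) : Matrix m m R :=
  Matrix.of fun j k => Ring.inverse (M k j)

variable {m : Type*} [Fintype m] [DecidableEq m]

/-- `J = J₂ ∘ J₁`, where `J₁(M) = M⁻¹` is the usual matrix inverse. -/
noncomputable def Jmap (M : Matrix m m R) : Matrix m m R := J2 (Ring.inverse M)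

/-- `J⁻¹ = J₁ ∘ J₂`. -/
noncomputable def JinvMap (M : Matrix m m R) : Matrix m m R := Ring.inverse (J2 M)

/-- `dom(J)`: `M` invertible and all entries of `M⁻¹` invertible. -/
def domJ (M : Matrix m m R) : Prop :=
  IsUnit M ∧ ∀ j k, IsUnit (Ring.inverse M j k)

/-- `dom(J⁻¹)`: all entries of `M` invertible and `J₂(M)` invertible. -/
def domJinv (M : Matrix m m R) : Prop :=
  (∀ j k, IsUnit (M j k)) ∧ IsUnit (J2 M)

/-- `dom(Jⁿ)` defined recursively: `M ∈ dom(Jⁿ⁺¹)` iff `M ∈ dom(J)` and `J(M) ∈ dom(Jⁿ)`. -/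
def domJpow : ℕ → Matrix m m R → Prop
  | 0, _ => True
  | n + 1, M => domJ M ∧ domJpow n (Jmap M)

/-- `A ∼ B`: `B = D₁⁻¹ A D₂` for diagonal matrices `D₁, D₂` with invertible diagonal entries. -/
def simRel (A B : Matrix m m R) : Prop :=
  ∃ d₁ d₂ : m → Rˣ,
    B = Matrix.diagonal (fun i => (((d₁ i)⁻¹ : Rˣ) : R)) * A *
        Matrix.diagonal (fun i => ((d₂ i : Rˣ) : R))

/-- entrywise conjugation `x⁻¹ A x` by an invertible ring element. -/
def conjEntry {m' : Type*} (x : Rˣ) (A : Matrix m' m' R) : Matrix m' m' R :=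
  Matrix.of fun j k => ((x⁻¹ : Rˣ) : R) * A j k * (x : R)

/-- `M̂ₙ(R)`: first row and first column consist entirely of `1`'s. -/
def Mhat {m' : Type*} [Zero m'] (A : Matrix m' m' R) : Prop :=
  ∀ k, A 0 k = 1 ∧ A k 0 = 1

/-- `Λ^L(A)_{jk} = a₁₁ a_{j1}⁻¹ a_{jk} a_{1k}⁻¹`. -/
noncomputable def LamL {m' : Type*} [Zero m'] (A : Matrix m' m' R) : Matrix m' m' R :=
  Matrix.of fun j k => A 0 0 * Ring.inverse (A j 0) * A j k * Ring.inverse (A 0 k)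

/-- `Λ^R(A)_{jk} = a_{j1}⁻¹ a_{jk} a_{1k}⁻¹ a₁₁`. -/
noncomputable def LamR {m' : Type*} [Zero m'] (A : Matrix m' m' R) : Matrix m' m' R :=
  Matrix.of fun j k => Ring.inverse (A j 0) * A j k * Ring.inverse (A 0 k) * A 0 0

/-- `Φ(A) = J₂(Λ^L(A⁻¹))`. -/
noncomputable def Phi [Zero m] (A : Matrix m m R) : Matrix m m R := J2 (LamL (Ring.inverse A))

/-- `dom(Φ)`: `A ∈ M̂ₙ(R)`, all entries of `A` invertible, `A` invertible,
all entries of `A⁻¹` invertible. -/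
def domPhi [Zero m] (A : Matrix m m R) : Prop :=
  Mhat A ∧ (∀ j k, IsUnit (A j k)) ∧ IsUnit A ∧ ∀ j k, IsUnit (Ring.inverse A j k)

/-- `Φ⁻¹(B) = Λ^R(J⁻¹(B)) = Λ^R((J₂ B)⁻¹)`. -/
noncomputable def PhiInv [Zero m] (B : Matrix m m R) : Matrix m m R := LamR (Ring.inverse (J2 B))

/-- `dom(Φ⁻¹)`: `B ∈ M̂ₙ(R)`, all entries of `B` invertible, `J₂(B)` invertible,
all entries of `J₂(B)⁻¹` invertible. -/
def domPhiInv [Zero m] (B : Matrix m m R) : Prop :=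
  Mhat B ∧ (∀ j k, IsUnit (B j k)) ∧ IsUnit (J2 B) ∧ ∀ j k, IsUnit (Ring.inverse (J2 B) j k)

/-- `dom(Φⁿ)` defined recursively. -/
def domPhipow [Zero m] : ℕ → Matrix m m R → Prop
  | 0, _ => True
  | n + 1, A => domPhi A ∧ domPhipow n (Phi A)

/-- `Ψ = J₂ ∘ Φ ∘ J₂`. -/
noncomputable def Psi [Zero m] (A : Matrix m m R) : Matrix m m R := J2 (Phi (J2 A))

/-- `dom(Ψ)`: `A ∈ M̂ₙ(R)`, all entries of `A` invertible, `J₂(A) ∈ dom(Φ)`. -/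
def domPsi [Zero m] (A : Matrix m m R) : Prop :=
  Mhat A ∧ (∀ j k, IsUnit (A j k)) ∧ domPhi (J2 A)

/-- every square submatrix (equinumerous injective choices of rows and columns) is invertible. -/
def allSquareSubInv (M : Matrix (Fin 3) (Fin 3) R) : Prop :=
  ∀ (k : ℕ) (r c : Fin k → Fin 3), Function.Injective r → Function.Injective c →
    IsUnit (M.submatrix r c)

/-- only the `1×1` and `2×2` submatrices are required to be invertible. -/
def sub12Inv (M : Matrix (Fin 3) (Fin 3) R) : Prop :=
  (∀ j k, IsUnit (M j k)) ∧
  ∀ (r c : Fin 2 → Fin 3), Function.Injective r → Function.Injective c →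
    IsUnit (M.submatrix r c)

/-- `S`: all square submatrices of `M` are invertible and `J₂(M)` is invertible. -/
def Sset (R : Type*) [Ring R] : Set (Matrix (Fin 3) (Fin 3) R) :=
  {M | allSquareSubInv M ∧ IsUnit (J2 M)}

/-- `Ŝ = S ∩ M̂₃(R)`. -/
def Shat (R : Type*) [Ring R] : Set (Matrix (Fin 3) (Fin 3) R) :=
  {M | M ∈ Sset R ∧ Mhat M}

end KontsevichDefs


section AuxKont
set_option maxHeartbeats 1000000
variable {R : Type*} [Ring R]


theorem schur_iff (u : Rˣ) (b c d : R) :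
    IsUnit !![(u:R), b; c, d] ↔ IsUnit (d - c * ↑u⁻¹ * b) := by
  rw [isUnit_iff_exists, isUnit_iff_exists]
  constructor
  · rintro ⟨N, hMN, hNM⟩
    refine ⟨N 1 1, ?_, ?_⟩
    · have e1 : (u:R) * N 0 1 + b * N 1 1 = 0 := by
        have := congrFun (congrFun hMN 0) 1
        simpa [Matrix.mul_apply, Fin.sum_univ_two] using this
      have e2 : c * N 0 1 + d * N 1 1 = 1 := by
        have := congrFun (congrFun hMN 1) 1
        simpa [Matrix.mul_apply, Fin.sum_univ_two] using this
      have hb : b * N 1 1 = -((u:R) * N 0 1) := eq_neg_of_add_eq_zero_right e1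
      calc (d - c * ↑u⁻¹ * b) * N 1 1
          = d * N 1 1 - c * (↑u⁻¹ * (b * N 1 1)) := by noncomm_ring
        _ = d * N 1 1 - c * (↑u⁻¹ * -((u:R) * N 0 1)) := by rw [hb]
        _ = d * N 1 1 - c * -(↑u⁻¹ * ((u:R) * N 0 1)) := by rw [mul_neg]
        _ = d * N 1 1 - c * -(N 0 1) := by rw [Units.inv_mul_cancel_left]
        _ = c * N 0 1 + d * N 1 1 := by noncomm_ring
        _ = 1 := e2
    · have e3 : N 1 0 * ↑u + N 1 1 * c = 0 := by
        have := congrFun (congrFun hNM 1) 0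
        simpa [Matrix.mul_apply, Fin.sum_univ_two] using this
      have e4 : N 1 0 * b + N 1 1 * d = 1 := by
        have := congrFun (congrFun hNM 1) 1
        simpa [Matrix.mul_apply, Fin.sum_univ_two] using this
      have hc : N 1 1 * c = -(N 1 0 * ↑u) := eq_neg_of_add_eq_zero_right e3
      calc N 1 1 * (d - c * ↑u⁻¹ * b)
          = N 1 1 * d - (N 1 1 * c) * ↑u⁻¹ * b := by noncomm_ring
        _ = N 1 1 * d - -(N 1 0 * ↑u) * ↑u⁻¹ * b := by rw [hc]
        _ = N 1 1 * d - -((N 1 0 * (↑u * ↑u⁻¹)) * b) := by noncomm_ring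
        _ = N 1 1 * d - -((N 1 0 * 1) * b) := by rw [Units.mul_inv]
        _ = N 1 0 * b + N 1 1 * d := by noncomm_ring
        _ = 1 := e4
  · rintro ⟨v, hv1, hv2⟩
    refine ⟨!![↑u⁻¹ + ↑u⁻¹ * b * v * c * ↑u⁻¹, -(↑u⁻¹ * b * v); -(v * c * ↑u⁻¹), v], ?_, ?_⟩ <;>
      ext i j <;> fin_cases i <;> fin_cases j <;>
      simp only [Matrix.mul_apply, Fin.sum_univ_two, Matrix.cons_val_zero,
        Matrix.cons_val_one, Matrix.head_cons, Matrix.cons_val', Matrix.empty_val',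
        Matrix.cons_val_fin_one, Matrix.head_fin_const, Fin.zero_eta, Fin.mk_one,
        Matrix.one_apply_eq, Fin.isValue, Matrix.one_apply_ne, ne_eq,
        show ((0:Fin 2) ≠ 1) from by decide, show ((1:Fin 2) ≠ 0) from by decide,
        not_false_eq_true]
    · -- (M N) 0 0 = 1
      calc (u:R) * (↑u⁻¹ + ↑u⁻¹ * b * v * c * ↑u⁻¹) + b * -(v * c * ↑u⁻¹)
          = ↑u * ↑u⁻¹ + (↑u * ↑u⁻¹) * (b * v * c * ↑u⁻¹) - b * v * c * ↑u⁻¹ := by noncomm_ring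
        _ = 1 := by rw [Units.mul_inv]; noncomm_ring
    · -- (M N) 0 1 = 0
      calc (u:R) * -(↑u⁻¹ * b * v) + b * v
          = -((↑u * ↑u⁻¹) * (b * v)) + b * v := by noncomm_ring
        _ = 0 := by rw [Units.mul_inv]; noncomm_ring
    · -- (M N) 1 0 = 0
      calc c * (↑u⁻¹ + ↑u⁻¹ * b * v * c * ↑u⁻¹) + d * -(v * c * ↑u⁻¹)
          = c * ↑u⁻¹ - ((d - c * ↑u⁻¹ * b) * v) * (c * ↑u⁻¹) := by noncomm_ring
        _ = c * ↑u⁻¹ - 1 * (c * ↑u⁻¹) := by rw [hv1]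
        _ = 0 := by noncomm_ring
    · -- (M N) 1 1 = 1
      calc c * -(↑u⁻¹ * b * v) + d * v
          = (d - c * ↑u⁻¹ * b) * v := by noncomm_ring
        _ = 1 := hv1
    · -- (N M) 0 0 = 1
      calc (↑u⁻¹ + ↑u⁻¹ * b * v * c * ↑u⁻¹) * ↑u + -(↑u⁻¹ * b * v) * c
          = ↑u⁻¹ * ↑u + ↑u⁻¹ * b * v * c * (↑u⁻¹ * ↑u) - ↑u⁻¹ * b * v * c := by noncomm_ring
        _ = 1 := by rw [Units.inv_mul]; noncomm_ring
    · -- (N M) 0 1 = 0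
      calc (↑u⁻¹ + ↑u⁻¹ * b * v * c * ↑u⁻¹) * b + -(↑u⁻¹ * b * v) * d
          = ↑u⁻¹ * b - (↑u⁻¹ * b) * (v * (d - c * ↑u⁻¹ * b)) := by noncomm_ring
        _ = ↑u⁻¹ * b - (↑u⁻¹ * b) * 1 := by rw [hv2]
        _ = 0 := by noncomm_ring
    · -- (N M) 1 0 = 0
      calc -(v * c * ↑u⁻¹) * ↑u + v * c
          = -(v * c * (↑u⁻¹ * ↑u)) + v * c := by noncomm_ring
        _ = 0 := by rw [Units.inv_mul]; noncomm_ring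
    · -- (N M) 1 1 = 1
      calc -(v * c * ↑u⁻¹) * b + v * d
          = v * (d - c * ↑u⁻¹ * b) := by noncomm_ring
        _ = 1 := hv2



theorem swap2_mul_swap2 : (!![0,1;1,0] : Matrix (Fin 2) (Fin 2) R) * !![0,1;1,0] = 1 := by
  rw [Matrix.mul_fin_two, Matrix.one_fin_two]; norm_num

theorem isUnit_swap2 : IsUnit (!![0,1;1,0] : Matrix (Fin 2) (Fin 2) R) :=
  ⟨⟨_, _, swap2_mul_swap2, swap2_mul_swap2⟩, rfl⟩

theorem swap2_mul (p q r s : R) : !![0,1;1,0] * !![p,q;r,s] = !![r,s;p,q] := by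
  rw [Matrix.mul_fin_two]; norm_num

theorem mul_swap2 (p q r s : R) : !![p,q;r,s] * !![0,1;1,0] = !![q,p;s,r] := by
  rw [Matrix.mul_fin_two]; norm_num

theorem rowswap_iff (p q r s : R) : IsUnit !![p,q;r,s] ↔ IsUnit !![r,s;p,q] := by
  constructor
  · intro h; have := isUnit_swap2.mul h; rwa [swap2_mul] at this
  · intro h; have := isUnit_swap2.mul h; rwa [swap2_mul] at this

theorem colswap_iff (p q r s : R) : IsUnit !![p,q;r,s] ↔ IsUnit !![q,p;s,r] := by
  constructor
  · intro h; have := h.mul isUnit_swap2; rwa [mul_swap2] at this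
  · intro h; have := h.mul isUnit_swap2; rwa [mul_swap2] at this




theorem isUnit_diagblock (p q r s : R) :
    IsUnit !![(1:R),0,0; 0,p,q; 0,r,s] ↔ IsUnit !![p,q;r,s] := by
  rw [isUnit_iff_exists, isUnit_iff_exists]
  constructor
  · rintro ⟨N, hMN, hNM⟩
    refine ⟨!![N 1 1, N 1 2; N 2 1, N 2 2], ?_, ?_⟩ <;> ext i j <;> fin_cases i <;> fin_cases j
    · have h' := congrFun (congrFun hMN 1) 1
      simp [Matrix.mul_apply, Fin.sum_univ_two, Fin.sum_univ_three, Matrix.vecHead, Matrix.vecTail, Matrix.one_apply] at h'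
      simp [Matrix.mul_apply, Fin.sum_univ_two, Fin.sum_univ_three, Matrix.vecHead, Matrix.vecTail, Matrix.one_apply]
      exact h'
    · have h' := congrFun (congrFun hMN 1) 2
      simp [Matrix.mul_apply, Fin.sum_univ_two, Fin.sum_univ_three, Matrix.vecHead, Matrix.vecTail, Matrix.one_apply] at h'
      simp [Matrix.mul_apply, Fin.sum_univ_two, Fin.sum_univ_three, Matrix.vecHead, Matrix.vecTail, Matrix.one_apply]
      exact h'
    · have h' := congrFun (congrFun hMN 2) 1
      simp [Matrix.mul_apply, Fin.sum_univ_two, Fin.sum_univ_three, Matrix.vecHead, Matrix.vecTail, Matrix.one_apply] at h'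
      simp [Matrix.mul_apply, Fin.sum_univ_two, Fin.sum_univ_three, Matrix.vecHead, Matrix.vecTail, Matrix.one_apply]
      exact h'
    · have h' := congrFun (congrFun hMN 2) 2
      simp [Matrix.mul_apply, Fin.sum_univ_two, Fin.sum_univ_three, Matrix.vecHead, Matrix.vecTail, Matrix.one_apply] at h'
      simp [Matrix.mul_apply, Fin.sum_univ_two, Fin.sum_univ_three, Matrix.vecHead, Matrix.vecTail, Matrix.one_apply]
      exact h'
    · have h' := congrFun (congrFun hNM 1) 1
      simp [Matrix.mul_apply, Fin.sum_univ_two, Fin.sum_univ_three, Matrix.vecHead, Matrix.vecTail, Matrix.one_apply] at h'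
      simp [Matrix.mul_apply, Fin.sum_univ_two, Fin.sum_univ_three, Matrix.vecHead, Matrix.vecTail, Matrix.one_apply]
      exact h'
    · have h' := congrFun (congrFun hNM 1) 2
      simp [Matrix.mul_apply, Fin.sum_univ_two, Fin.sum_univ_three, Matrix.vecHead, Matrix.vecTail, Matrix.one_apply] at h'
      simp [Matrix.mul_apply, Fin.sum_univ_two, Fin.sum_univ_three, Matrix.vecHead, Matrix.vecTail, Matrix.one_apply]
      exact h'
    · have h' := congrFun (congrFun hNM 2) 1
      simp [Matrix.mul_apply, Fin.sum_univ_two, Fin.sum_univ_three, Matrix.vecHead, Matrix.vecTail, Matrix.one_apply] at h'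
      simp [Matrix.mul_apply, Fin.sum_univ_two, Fin.sum_univ_three, Matrix.vecHead, Matrix.vecTail, Matrix.one_apply]
      exact h'
    · have h' := congrFun (congrFun hNM 2) 2
      simp [Matrix.mul_apply, Fin.sum_univ_two, Fin.sum_univ_three, Matrix.vecHead, Matrix.vecTail, Matrix.one_apply] at h'
      simp [Matrix.mul_apply, Fin.sum_univ_two, Fin.sum_univ_three, Matrix.vecHead, Matrix.vecTail, Matrix.one_apply]
      exact h'
  · rintro ⟨N, hMN, hNM⟩
    refine ⟨!![1,0,0; 0, N 0 0, N 0 1; 0, N 1 0, N 1 1], ?_, ?_⟩ <;> ext i j <;>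
      fin_cases i <;> fin_cases j
    · simp [Matrix.mul_apply, Fin.sum_univ_two, Fin.sum_univ_three, Matrix.vecHead, Matrix.vecTail, Matrix.one_apply]
    · simp [Matrix.mul_apply, Fin.sum_univ_two, Fin.sum_univ_three, Matrix.vecHead, Matrix.vecTail, Matrix.one_apply]
    · simp [Matrix.mul_apply, Fin.sum_univ_two, Fin.sum_univ_three, Matrix.vecHead, Matrix.vecTail, Matrix.one_apply]
    · simp [Matrix.mul_apply, Fin.sum_univ_two, Fin.sum_univ_three, Matrix.vecHead, Matrix.vecTail, Matrix.one_apply]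
    · have h' := congrFun (congrFun hMN 0) 0
      simp [Matrix.mul_apply, Fin.sum_univ_two, Fin.sum_univ_three, Matrix.vecHead, Matrix.vecTail, Matrix.one_apply] at h'
      simp [Matrix.mul_apply, Fin.sum_univ_two, Fin.sum_univ_three, Matrix.vecHead, Matrix.vecTail, Matrix.one_apply]
      exact h'
    · have h' := congrFun (congrFun hMN 0) 1
      simp [Matrix.mul_apply, Fin.sum_univ_two, Fin.sum_univ_three, Matrix.vecHead, Matrix.vecTail, Matrix.one_apply] at h'
      simp [Matrix.mul_apply, Fin.sum_univ_two, Fin.sum_univ_three, Matrix.vecHead, Matrix.vecTail, Matrix.one_apply]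
      exact h'
    · simp [Matrix.mul_apply, Fin.sum_univ_two, Fin.sum_univ_three, Matrix.vecHead, Matrix.vecTail, Matrix.one_apply]
    · have h' := congrFun (congrFun hMN 1) 0
      simp [Matrix.mul_apply, Fin.sum_univ_two, Fin.sum_univ_three, Matrix.vecHead, Matrix.vecTail, Matrix.one_apply] at h'
      simp [Matrix.mul_apply, Fin.sum_univ_two, Fin.sum_univ_three, Matrix.vecHead, Matrix.vecTail, Matrix.one_apply]
      exact h'
    · have h' := congrFun (congrFun hMN 1) 1
      simp [Matrix.mul_apply, Fin.sum_univ_two, Fin.sum_univ_three, Matrix.vecHead, Matrix.vecTail, Matrix.one_apply] at h'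
      simp [Matrix.mul_apply, Fin.sum_univ_two, Fin.sum_univ_three, Matrix.vecHead, Matrix.vecTail, Matrix.one_apply]
      exact h'
    · simp [Matrix.mul_apply, Fin.sum_univ_two, Fin.sum_univ_three, Matrix.vecHead, Matrix.vecTail, Matrix.one_apply]
    · simp [Matrix.mul_apply, Fin.sum_univ_two, Fin.sum_univ_three, Matrix.vecHead, Matrix.vecTail, Matrix.one_apply]
    · simp [Matrix.mul_apply, Fin.sum_univ_two, Fin.sum_univ_three, Matrix.vecHead, Matrix.vecTail, Matrix.one_apply]
    · simp [Matrix.mul_apply, Fin.sum_univ_two, Fin.sum_univ_three, Matrix.vecHead, Matrix.vecTail, Matrix.one_apply]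
    · have h' := congrFun (congrFun hNM 0) 0
      simp [Matrix.mul_apply, Fin.sum_univ_two, Fin.sum_univ_three, Matrix.vecHead, Matrix.vecTail, Matrix.one_apply] at h'
      simp [Matrix.mul_apply, Fin.sum_univ_two, Fin.sum_univ_three, Matrix.vecHead, Matrix.vecTail, Matrix.one_apply]
      exact h'
    · have h' := congrFun (congrFun hNM 0) 1
      simp [Matrix.mul_apply, Fin.sum_univ_two, Fin.sum_univ_three, Matrix.vecHead, Matrix.vecTail, Matrix.one_apply] at h'
      simp [Matrix.mul_apply, Fin.sum_univ_two, Fin.sum_univ_three, Matrix.vecHead, Matrix.vecTail, Matrix.one_apply]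
      exact h'
    · simp [Matrix.mul_apply, Fin.sum_univ_two, Fin.sum_univ_three, Matrix.vecHead, Matrix.vecTail, Matrix.one_apply]
    · have h' := congrFun (congrFun hNM 1) 0
      simp [Matrix.mul_apply, Fin.sum_univ_two, Fin.sum_univ_three, Matrix.vecHead, Matrix.vecTail, Matrix.one_apply] at h'
      simp [Matrix.mul_apply, Fin.sum_univ_two, Fin.sum_univ_three, Matrix.vecHead, Matrix.vecTail, Matrix.one_apply]
      exact h'
    · have h' := congrFun (congrFun hNM 1) 1
      simp [Matrix.mul_apply, Fin.sum_univ_two, Fin.sum_univ_three, Matrix.vecHead, Matrix.vecTail, Matrix.one_apply] at h'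
      simp [Matrix.mul_apply, Fin.sum_univ_two, Fin.sum_univ_three, Matrix.vecHead, Matrix.vecTail, Matrix.one_apply]
      exact h'



theorem isUnit_lower_elem (v1 v2 : R) : IsUnit !![(1:R),0,0; v1,1,0; v2,0,1] := by
  rw [isUnit_iff_exists]
  refine ⟨!![(1:R),0,0; -v1,1,0; -v2,0,1], ?_, ?_⟩ <;>
    · rw [Matrix.mul_fin_three]
      ext i j
      fin_cases i <;> fin_cases j <;> simp [Matrix.one_apply, Matrix.vecHead, Matrix.vecTail] <;> noncomm_ring

theorem isUnit_upper_elem (w1 w2 : R) : IsUnit !![(1:R),w1,w2; 0,1,0; 0,0,1] := by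
  rw [isUnit_iff_exists]
  refine ⟨!![(1:R),-w1,-w2; 0,1,0; 0,0,1], ?_, ?_⟩ <;>
    · rw [Matrix.mul_fin_three]
      ext i j
      fin_cases i <;> fin_cases j <;> simp [Matrix.one_apply, Matrix.vecHead, Matrix.vecTail] <;> noncomm_ring

theorem isUnit_colop : IsUnit (!![1,-1,0; 0,1,-1; 0,0,1] : Matrix (Fin 3) (Fin 3) R) := by
  rw [isUnit_iff_exists]
  refine ⟨!![(1:R),1,1; 0,1,1; 0,0,1], ?_, ?_⟩ <;>
    · rw [Matrix.mul_fin_three]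
      ext i j
      fin_cases i <;> fin_cases j <;> simp [Matrix.one_apply, Matrix.vecHead, Matrix.vecTail] <;> noncomm_ring

theorem isUnit_rowop : IsUnit (!![1,0,0; -1,1,0; 0,-1,1] : Matrix (Fin 3) (Fin 3) R) := by
  rw [isUnit_iff_exists]
  refine ⟨!![(1:R),0,0; 1,1,0; 1,1,1], ?_, ?_⟩ <;>
    · rw [Matrix.mul_fin_three]
      ext i j
      fin_cases i <;> fin_cases j <;> simp [Matrix.one_apply, Matrix.vecHead, Matrix.vecTail] <;> noncomm_ring



-- factorization: lower-block shape
theorem lower_factor (v1 v2 p q r s : R) :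
    !![(1:R),0,0; v1,p,q; v2,r,s] = !![(1:R),0,0; v1,1,0; v2,0,1] * !![(1:R),0,0; 0,p,q; 0,r,s] := by
  rw [Matrix.mul_fin_three]
  ext i j
  fin_cases i <;> fin_cases j <;> simp [Matrix.vecHead, Matrix.vecTail] <;> noncomm_ring

theorem upper_factor (w1 w2 p q r s : R) :
    !![(1:R),w1,w2; 0,p,q; 0,r,s] = !![(1:R),0,0; 0,p,q; 0,r,s] * !![(1:R),w1,w2; 0,1,0; 0,0,1] := by
  rw [Matrix.mul_fin_three]
  ext i j
  fin_cases i <;> fin_cases j <;> simp [Matrix.vecHead, Matrix.vecTail] <;> noncomm_ring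


theorem isUnit_mul_iff_left {x : R} (h : IsUnit x) (y : R) : IsUnit (x * y) ↔ IsUnit y := by
  rcases h with ⟨u, rfl⟩; exact Units.isUnit_units_mul u y

theorem isUnit_mul_iff_right {x : R} (h : IsUnit x) (y : R) : IsUnit (y * x) ↔ IsUnit y := by
  rcases h with ⟨u, rfl⟩; exact Units.isUnit_mul_units y u

theorem isUnit_mul_iff_left' {m : Type*} [Fintype m] [DecidableEq m]
    {X : Matrix m m R} (h : IsUnit X) (Y : Matrix m m R) : IsUnit (X * Y) ↔ IsUnit Y := by
  rcases h with ⟨u, rfl⟩; exact Units.isUnit_units_mul u Y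

theorem red3_lower (v1 v2 p q r s : R) :
    IsUnit !![(1:R),0,0; v1,p,q; v2,r,s] ↔ IsUnit !![p,q;r,s] := by
  rw [lower_factor, isUnit_mul_iff_left' (isUnit_lower_elem v1 v2)]
  exact isUnit_diagblock p q r s

theorem red3_upper (w1 w2 p q r s : R) :
    IsUnit !![(1:R),w1,w2; 0,p,q; 0,r,s] ↔ IsUnit !![p,q;r,s] := by
  rw [upper_factor]
  rw [show IsUnit (!![(1:R),0,0; 0,p,q; 0,r,s] * !![(1:R),w1,w2; 0,1,0; 0,0,1]) ↔
      IsUnit !![(1:R),0,0; 0,p,q; 0,r,s] from by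
    rcases isUnit_upper_elem w1 w2 with ⟨u, hu⟩
    rw [← hu]; exact Units.isUnit_mul_units _ u]
  exact isUnit_diagblock p q r s

theorem ringInverse_eq {x : R} (h : IsUnit x) : Ring.inverse x = ↑h.unit⁻¹ := by
  have hx : x * ↑h.unit⁻¹ = 1 := by
    nth_rewrite 1 [← h.unit_spec]; exact Units.mul_inv _
  calc Ring.inverse x = Ring.inverse x * (x * ↑h.unit⁻¹) := by rw [hx, mul_one]
    _ = (Ring.inverse x * x) * ↑h.unit⁻¹ := by rw [mul_assoc]
    _ = ↑h.unit⁻¹ := by rw [Ring.inverse_mul_cancel _ h, one_mul]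

theorem isUnit_mul_iff_right' {m : Type*} [Fintype m] [DecidableEq m]
    {X : Matrix m m R} (h : IsUnit X) (Y : Matrix m m R) : IsUnit (Y * X) ↔ IsUnit Y := by
  rcases h with ⟨u, rfl⟩; exact Units.isUnit_mul_units Y u

theorem isUnit_11x (x : R) : IsUnit !![(1:R),1;1,x] ↔ IsUnit (x-1) := by
  simpa using schur_iff 1 1 1 x

theorem isUnit_11xy (x y : R) : IsUnit !![(1:R),1;x,y] ↔ IsUnit (y-x) := by
  simpa using schur_iff 1 1 x y

theorem isUnit_1x1y (x y : R) : IsUnit !![(1:R),x;1,y] ↔ IsUnit (y-x) := by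
  simpa using schur_iff 1 x 1 y

theorem isUnit_abcd {a b : R} (ha : IsUnit a) (hb : IsUnit b) (c d : R) :
    IsUnit !![a,b;c,d] ↔ IsUnit (d * Ring.inverse b - c * Ring.inverse a) := by
  have h0 := schur_iff ha.unit b c d
  rw [ha.unit_spec] at h0
  have h1 : d - c * ↑ha.unit⁻¹ * b = (d * Ring.inverse b - c * Ring.inverse a) * b := by
    rw [← ringInverse_eq ha]
    calc d - c * Ring.inverse a * b
        = d * 1 - c * Ring.inverse a * b := by rw [mul_one]
      _ = d * (Ring.inverse b * b) - c * Ring.inverse a * b := by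
          rw [Ring.inverse_mul_cancel b hb]
      _ = (d * Ring.inverse b - c * Ring.inverse a) * b := by noncomm_ring
  rw [h0, h1, isUnit_mul_iff_right hb]

end AuxKont

set_option maxHeartbeats 2000000 in
/-- For `A = [[1,1,1],[1,a,b],[1,c,d]]`: all `1×1` and `2×2`
submatrices of `A` are invertible iff the thirteen listed elements are invertible;
and in that case `A` is invertible iff `(d−c)⁻¹(c−1) − (b−a)⁻¹(a−1)` is invertible,
while `J₂(A)` is invertible iff `(c−1)(d−c)⁻¹d − (a−1)(b−a)⁻¹b` is invertible. -/
theorem submatrix_characterization {R : Type*} [Ring R] (a b c d : R) :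
    (sub12Inv (!![1, 1, 1; 1, a, b; 1, c, d] : Matrix (Fin 3) (Fin 3) R) ↔
      (IsUnit a ∧ IsUnit b ∧ IsUnit c ∧ IsUnit d ∧
       IsUnit (a - 1) ∧ IsUnit (b - 1) ∧ IsUnit (c - 1) ∧ IsUnit (d - 1) ∧
       IsUnit (d - c) ∧ IsUnit (d - b) ∧ IsUnit (c - a) ∧ IsUnit (b - a) ∧
       IsUnit (d * Ring.inverse b - c * Ring.inverse a))) ∧
    (sub12Inv (!![1, 1, 1; 1, a, b; 1, c, d] : Matrix (Fin 3) (Fin 3) R) →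
      ((IsUnit (!![1, 1, 1; 1, a, b; 1, c, d] : Matrix (Fin 3) (Fin 3) R) ↔
          IsUnit (Ring.inverse (d - c) * (c - 1) - Ring.inverse (b - a) * (a - 1))) ∧
       (IsUnit (J2 (!![1, 1, 1; 1, a, b; 1, c, d] : Matrix (Fin 3) (Fin 3) R)) ↔
          IsUnit ((c - 1) * Ring.inverse (d - c) * d -
            (a - 1) * Ring.inverse (b - a) * b)))) := by
  have fwd : sub12Inv (!![1, 1, 1; 1, a, b; 1, c, d] : Matrix (Fin 3) (Fin 3) R) →
      (IsUnit a ∧ IsUnit b ∧ IsUnit c ∧ IsUnit d ∧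
       IsUnit (a - 1) ∧ IsUnit (b - 1) ∧ IsUnit (c - 1) ∧ IsUnit (d - 1) ∧
       IsUnit (d - c) ∧ IsUnit (d - b) ∧ IsUnit (c - a) ∧ IsUnit (b - a) ∧
       IsUnit (d * Ring.inverse b - c * Ring.inverse a)) := by
    rintro ⟨h1, h2⟩
    have ha : IsUnit a := by simpa [Matrix.cons_val_zero, Matrix.cons_val_one, Matrix.head_cons, Matrix.cons_val_two, Matrix.tail_cons, Matrix.cons_val_fin_one, Matrix.of_apply, Matrix.cons_val', Matrix.vecHead, Matrix.vecTail, Matrix.empty_val', Matrix.head_fin_const, Matrix.submatrix_apply, Fin.isValue] using h1 1 1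
    have hb : IsUnit b := by simpa [Matrix.cons_val_zero, Matrix.cons_val_one, Matrix.head_cons, Matrix.cons_val_two, Matrix.tail_cons, Matrix.cons_val_fin_one, Matrix.of_apply, Matrix.cons_val', Matrix.vecHead, Matrix.vecTail, Matrix.empty_val', Matrix.head_fin_const, Matrix.submatrix_apply, Fin.isValue] using h1 1 2
    have hc : IsUnit c := by simpa [Matrix.cons_val_zero, Matrix.cons_val_one, Matrix.head_cons, Matrix.cons_val_two, Matrix.tail_cons, Matrix.cons_val_fin_one, Matrix.of_apply, Matrix.cons_val', Matrix.vecHead, Matrix.vecTail, Matrix.empty_val', Matrix.head_fin_const, Matrix.submatrix_apply, Fin.isValue] using h1 2 1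
    have hd : IsUnit d := by simpa [Matrix.cons_val_zero, Matrix.cons_val_one, Matrix.head_cons, Matrix.cons_val_two, Matrix.tail_cons, Matrix.cons_val_fin_one, Matrix.of_apply, Matrix.cons_val', Matrix.vecHead, Matrix.vecTail, Matrix.empty_val', Matrix.head_fin_const, Matrix.submatrix_apply, Fin.isValue] using h1 2 2
    have s1 : IsUnit !![(1:R),1;1,a] := by
      have hh := h2 ![0,1] ![0,1] (by decide) (by decide)
      rwa [show (!![1, 1, 1; 1, a, b; 1, c, d] : Matrix (Fin 3) (Fin 3) R).submatrix ![0,1] ![0,1] = !![(1:R),1;1,a] from by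
        ext i j; fin_cases i <;> fin_cases j <;> simp [Matrix.cons_val_zero, Matrix.cons_val_one, Matrix.head_cons, Matrix.cons_val_two, Matrix.tail_cons, Matrix.cons_val_fin_one, Matrix.of_apply, Matrix.cons_val', Matrix.vecHead, Matrix.vecTail, Matrix.empty_val', Matrix.head_fin_const, Matrix.submatrix_apply, Fin.isValue]] at hh
    have s2 : IsUnit !![(1:R),1;1,b] := by
      have hh := h2 ![0,1] ![0,2] (by decide) (by decide)
      rwa [show (!![1, 1, 1; 1, a, b; 1, c, d] : Matrix (Fin 3) (Fin 3) R).submatrix ![0,1] ![0,2] = !![(1:R),1;1,b] from by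
        ext i j; fin_cases i <;> fin_cases j <;> simp [Matrix.cons_val_zero, Matrix.cons_val_one, Matrix.head_cons, Matrix.cons_val_two, Matrix.tail_cons, Matrix.cons_val_fin_one, Matrix.of_apply, Matrix.cons_val', Matrix.vecHead, Matrix.vecTail, Matrix.empty_val', Matrix.head_fin_const, Matrix.submatrix_apply, Fin.isValue]] at hh
    have s3 : IsUnit !![(1:R),1;a,b] := by
      have hh := h2 ![0,1] ![1,2] (by decide) (by decide)
      rwa [show (!![1, 1, 1; 1, a, b; 1, c, d] : Matrix (Fin 3) (Fin 3) R).submatrix ![0,1] ![1,2] = !![(1:R),1;a,b] from by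
        ext i j; fin_cases i <;> fin_cases j <;> simp [Matrix.cons_val_zero, Matrix.cons_val_one, Matrix.head_cons, Matrix.cons_val_two, Matrix.tail_cons, Matrix.cons_val_fin_one, Matrix.of_apply, Matrix.cons_val', Matrix.vecHead, Matrix.vecTail, Matrix.empty_val', Matrix.head_fin_const, Matrix.submatrix_apply, Fin.isValue]] at hh
    have s4 : IsUnit !![(1:R),1;1,c] := by
      have hh := h2 ![0,2] ![0,1] (by decide) (by decide)
      rwa [show (!![1, 1, 1; 1, a, b; 1, c, d] : Matrix (Fin 3) (Fin 3) R).submatrix ![0,2] ![0,1] = !![(1:R),1;1,c] from by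
        ext i j; fin_cases i <;> fin_cases j <;> simp [Matrix.cons_val_zero, Matrix.cons_val_one, Matrix.head_cons, Matrix.cons_val_two, Matrix.tail_cons, Matrix.cons_val_fin_one, Matrix.of_apply, Matrix.cons_val', Matrix.vecHead, Matrix.vecTail, Matrix.empty_val', Matrix.head_fin_const, Matrix.submatrix_apply, Fin.isValue]] at hh
    have s5 : IsUnit !![(1:R),1;1,d] := by
      have hh := h2 ![0,2] ![0,2] (by decide) (by decide)
      rwa [show (!![1, 1, 1; 1, a, b; 1, c, d] : Matrix (Fin 3) (Fin 3) R).submatrix ![0,2] ![0,2] = !![(1:R),1;1,d] from by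
        ext i j; fin_cases i <;> fin_cases j <;> simp [Matrix.cons_val_zero, Matrix.cons_val_one, Matrix.head_cons, Matrix.cons_val_two, Matrix.tail_cons, Matrix.cons_val_fin_one, Matrix.of_apply, Matrix.cons_val', Matrix.vecHead, Matrix.vecTail, Matrix.empty_val', Matrix.head_fin_const, Matrix.submatrix_apply, Fin.isValue]] at hh
    have s6 : IsUnit !![(1:R),1;c,d] := by
      have hh := h2 ![0,2] ![1,2] (by decide) (by decide)
      rwa [show (!![1, 1, 1; 1, a, b; 1, c, d] : Matrix (Fin 3) (Fin 3) R).submatrix ![0,2] ![1,2] = !![(1:R),1;c,d] from by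
        ext i j; fin_cases i <;> fin_cases j <;> simp [Matrix.cons_val_zero, Matrix.cons_val_one, Matrix.head_cons, Matrix.cons_val_two, Matrix.tail_cons, Matrix.cons_val_fin_one, Matrix.of_apply, Matrix.cons_val', Matrix.vecHead, Matrix.vecTail, Matrix.empty_val', Matrix.head_fin_const, Matrix.submatrix_apply, Fin.isValue]] at hh
    have s7 : IsUnit !![(1:R),a;1,c] := by
      have hh := h2 ![1,2] ![0,1] (by decide) (by decide)
      rwa [show (!![1, 1, 1; 1, a, b; 1, c, d] : Matrix (Fin 3) (Fin 3) R).submatrix ![1,2] ![0,1] = !![(1:R),a;1,c] from by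
        ext i j; fin_cases i <;> fin_cases j <;> simp [Matrix.cons_val_zero, Matrix.cons_val_one, Matrix.head_cons, Matrix.cons_val_two, Matrix.tail_cons, Matrix.cons_val_fin_one, Matrix.of_apply, Matrix.cons_val', Matrix.vecHead, Matrix.vecTail, Matrix.empty_val', Matrix.head_fin_const, Matrix.submatrix_apply, Fin.isValue]] at hh
    have s8 : IsUnit !![(1:R),b;1,d] := by
      have hh := h2 ![1,2] ![0,2] (by decide) (by decide)
      rwa [show (!![1, 1, 1; 1, a, b; 1, c, d] : Matrix (Fin 3) (Fin 3) R).submatrix ![1,2] ![0,2] = !![(1:R),b;1,d] from by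
        ext i j; fin_cases i <;> fin_cases j <;> simp [Matrix.cons_val_zero, Matrix.cons_val_one, Matrix.head_cons, Matrix.cons_val_two, Matrix.tail_cons, Matrix.cons_val_fin_one, Matrix.of_apply, Matrix.cons_val', Matrix.vecHead, Matrix.vecTail, Matrix.empty_val', Matrix.head_fin_const, Matrix.submatrix_apply, Fin.isValue]] at hh
    have s9 : IsUnit !![a,b;c,d] := by
      have hh := h2 ![1,2] ![1,2] (by decide) (by decide)
      rwa [show (!![1, 1, 1; 1, a, b; 1, c, d] : Matrix (Fin 3) (Fin 3) R).submatrix ![1,2] ![1,2] = !![a,b;c,d] from by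
        ext i j; fin_cases i <;> fin_cases j <;> simp [Matrix.cons_val_zero, Matrix.cons_val_one, Matrix.head_cons, Matrix.cons_val_two, Matrix.tail_cons, Matrix.cons_val_fin_one, Matrix.of_apply, Matrix.cons_val', Matrix.vecHead, Matrix.vecTail, Matrix.empty_val', Matrix.head_fin_const, Matrix.submatrix_apply, Fin.isValue]] at hh
    exact ⟨ha, hb, hc, hd, (isUnit_11x a).mp s1, (isUnit_11x b).mp s2, (isUnit_11x c).mp s4,
      (isUnit_11x d).mp s5, (isUnit_11xy c d).mp s6, (isUnit_1x1y b d).mp s8,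
      (isUnit_1x1y a c).mp s7, (isUnit_11xy a b).mp s3, (isUnit_abcd ha hb c d).mp s9⟩
  have bwd : (IsUnit a ∧ IsUnit b ∧ IsUnit c ∧ IsUnit d ∧
       IsUnit (a - 1) ∧ IsUnit (b - 1) ∧ IsUnit (c - 1) ∧ IsUnit (d - 1) ∧
       IsUnit (d - c) ∧ IsUnit (d - b) ∧ IsUnit (c - a) ∧ IsUnit (b - a) ∧
       IsUnit (d * Ring.inverse b - c * Ring.inverse a)) →
      sub12Inv (!![1, 1, 1; 1, a, b; 1, c, d] : Matrix (Fin 3) (Fin 3) R) := by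
    rintro ⟨ha, hb, hc, hd, ha1, hb1, hc1, hd1, hdc, hdb, hca, hba, hx⟩
    have v1 : IsUnit !![(1:R),1;1,a] := (isUnit_11x a).mpr ha1
    have v2 : IsUnit !![(1:R),1;1,b] := (isUnit_11x b).mpr hb1
    have v3 : IsUnit !![(1:R),1;a,b] := (isUnit_11xy a b).mpr hba
    have v4 : IsUnit !![(1:R),1;1,c] := (isUnit_11x c).mpr hc1
    have v5 : IsUnit !![(1:R),1;1,d] := (isUnit_11x d).mpr hd1
    have v6 : IsUnit !![(1:R),1;c,d] := (isUnit_11xy c d).mpr hdc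
    have v7 : IsUnit !![(1:R),a;1,c] := (isUnit_1x1y a c).mpr hca
    have v8 : IsUnit !![(1:R),b;1,d] := (isUnit_1x1y b d).mpr hdb
    have v9 : IsUnit !![a,b;c,d] := (isUnit_abcd ha hb c d).mpr hx
    have w1 := (rowswap_iff _ _ _ _).mp v1
    have w2 := (rowswap_iff _ _ _ _).mp v2
    have w3 := (rowswap_iff _ _ _ _).mp v3
    have w4 := (rowswap_iff _ _ _ _).mp v4
    have w5 := (rowswap_iff _ _ _ _).mp v5
    have w6 := (rowswap_iff _ _ _ _).mp v6
    have w7 := (rowswap_iff _ _ _ _).mp v7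
    have w8 := (rowswap_iff _ _ _ _).mp v8
    have w9 := (rowswap_iff _ _ _ _).mp v9
    have x1 := (colswap_iff _ _ _ _).mp v1
    have x2 := (colswap_iff _ _ _ _).mp v2
    have x3 := (colswap_iff _ _ _ _).mp v3
    have x4 := (colswap_iff _ _ _ _).mp v4
    have x5 := (colswap_iff _ _ _ _).mp v5
    have x6 := (colswap_iff _ _ _ _).mp v6
    have x7 := (colswap_iff _ _ _ _).mp v7
    have x8 := (colswap_iff _ _ _ _).mp v8
    have x9 := (colswap_iff _ _ _ _).mp v9
    have y1 := (colswap_iff _ _ _ _).mp w1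
    have y2 := (colswap_iff _ _ _ _).mp w2
    have y3 := (colswap_iff _ _ _ _).mp w3
    have y4 := (colswap_iff _ _ _ _).mp w4
    have y5 := (colswap_iff _ _ _ _).mp w5
    have y6 := (colswap_iff _ _ _ _).mp w6
    have y7 := (colswap_iff _ _ _ _).mp w7
    have y8 := (colswap_iff _ _ _ _).mp w8
    have y9 := (colswap_iff _ _ _ _).mp w9
    constructor
    · intro j k
      fin_cases j <;> fin_cases k <;>
        simp only [Matrix.cons_val_zero, Matrix.cons_val_one, Matrix.head_cons, Matrix.cons_val_two, Matrix.tail_cons, Matrix.cons_val_fin_one, Matrix.of_apply, Matrix.cons_val', Matrix.vecHead, Matrix.vecTail, Matrix.empty_val', Matrix.head_fin_const, Matrix.submatrix_apply, Fin.isValue] <;>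
        first
          | exact isUnit_one
          | exact ha
          | exact hb
          | exact hc
          | exact hd
    · intro r c' hr hc'
      rw [Matrix.eta_fin_two ((!![1,1,1;1,a,b;1,c,d] : Matrix (Fin 3) (Fin 3) R).submatrix r c')]
      simp only [Matrix.submatrix_apply]
      have hrr : r 0 ≠ r 1 := fun hh => absurd (hr hh) (by decide)
      have hcc : c' 0 ≠ c' 1 := fun hh => absurd (hc' hh) (by decide)
      obtain ⟨i1, hi1⟩ : ∃ t, r 0 = t := ⟨_, rfl⟩
      obtain ⟨i2, hi2⟩ : ∃ t, r 1 = t := ⟨_, rfl⟩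
      obtain ⟨j1, hj1⟩ : ∃ t, c' 0 = t := ⟨_, rfl⟩
      obtain ⟨j2, hj2⟩ : ∃ t, c' 1 = t := ⟨_, rfl⟩
      rw [hi1, hi2] at hrr
      rw [hj1, hj2] at hcc
      rw [hi1, hi2, hj1, hj2]
      clear hi1 hi2 hj1 hj2
      fin_cases i1 <;> fin_cases i2 <;> fin_cases j1 <;> fin_cases j2 <;>
        first
          | exact absurd rfl hrr
          | exact absurd rfl hcc
          | (norm_num [Matrix.cons_val_zero, Matrix.cons_val_one, Matrix.head_cons, Matrix.cons_val_two, Matrix.tail_cons, Matrix.cons_val_fin_one, Matrix.of_apply, Matrix.cons_val', Matrix.vecHead, Matrix.vecTail, Matrix.empty_val', Matrix.head_fin_const, Fin.isValue]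
             assumption)
  refine ⟨⟨fwd, bwd⟩, ?_⟩
  intro h
  obtain ⟨ha, hb, hc, hd, ha1, hb1, hc1, hd1, hdc, hdb, hca, hba, hx⟩ := fwd h
  have haa' : a * Ring.inverse a = 1 := Ring.mul_inverse_cancel a ha
  have ha'a : Ring.inverse a * a = 1 := Ring.inverse_mul_cancel a ha
  have hbb' : b * Ring.inverse b = 1 := Ring.mul_inverse_cancel b hb
  have hb'b : Ring.inverse b * b = 1 := Ring.inverse_mul_cancel b hb
  have hcc' : c * Ring.inverse c = 1 := Ring.mul_inverse_cancel c hc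
  have hc'c : Ring.inverse c * c = 1 := Ring.inverse_mul_cancel c hc
  have hdd' : d * Ring.inverse d = 1 := Ring.mul_inverse_cancel d hd
  have hd'd : Ring.inverse d * d = 1 := Ring.inverse_mul_cancel d hd
  have hba1 : (b-a) * Ring.inverse (b-a) = 1 := Ring.mul_inverse_cancel _ hba
  have hba2 : Ring.inverse (b-a) * (b-a) = 1 := Ring.inverse_mul_cancel _ hba
  have hdc1 : (d-c) * Ring.inverse (d-c) = 1 := Ring.mul_inverse_cancel _ hdc
  have hdc2 : Ring.inverse (d-c) * (d-c) = 1 := Ring.inverse_mul_cancel _ hdc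
  constructor
  · -- A invertible iff S invertible
    have step1 : IsUnit (!![1,1,1;1,a,b;1,c,d] : Matrix (Fin 3) (Fin 3) R) ↔
        IsUnit ((!![1,1,1;1,a,b;1,c,d] : Matrix (Fin 3) (Fin 3) R) * !![1,-1,0;0,1,-1;0,0,1]) :=
      (isUnit_mul_iff_right' isUnit_colop _).symm
    have prod : (!![1,1,1;1,a,b;1,c,d] : Matrix (Fin 3) (Fin 3) R) * !![1,-1,0;0,1,-1;0,0,1] =
        !![1,0,0; 1,a-1,b-a; 1,c-1,d-c] := by
      rw [Matrix.mul_fin_three]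
      ext i j
      fin_cases i <;> fin_cases j <;>
        simp [Matrix.vecHead, Matrix.vecTail] <;> noncomm_ring
    rw [step1, prod, red3_lower, colswap_iff]
    have Uba : Rˣ := ⟨b-a, Ring.inverse (b-a), hba1, hba2⟩
    have hschur := schur_iff (⟨b-a, Ring.inverse (b-a), hba1, hba2⟩ : Rˣ) (a-1) (d-c) (c-1)
    rw [show ((⟨b-a, Ring.inverse (b-a), hba1, hba2⟩ : Rˣ) : R) = b - a from rfl] at hschur
    rw [hschur,
      show (((⟨b-a, Ring.inverse (b-a), hba1, hba2⟩ : Rˣ)⁻¹ : Rˣ) : R) = Ring.inverse (b-a)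
        from rfl]
    have key : (c-1) - (d-c) * Ring.inverse (b-a) * (a-1) =
        (d-c) * (Ring.inverse (d-c) * (c-1) - Ring.inverse (b-a) * (a-1)) := by
      calc (c-1) - (d-c) * Ring.inverse (b-a) * (a-1)
          = 1 * (c-1) - (d-c) * (Ring.inverse (b-a) * (a-1)) := by noncomm_ring
        _ = ((d-c) * Ring.inverse (d-c)) * (c-1) - (d-c) * (Ring.inverse (b-a) * (a-1)) := by
            rw [hdc1]
        _ = (d-c) * (Ring.inverse (d-c) * (c-1) - Ring.inverse (b-a) * (a-1)) := by noncomm_ring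
    rw [key]
    exact isUnit_mul_iff_left hdc _
  · -- J₂(A) invertible iff T invertible
    have hJ2 : J2 (!![1,1,1;1,a,b;1,c,d] : Matrix (Fin 3) (Fin 3) R) =
        !![1,1,1; 1, Ring.inverse a, Ring.inverse c; 1, Ring.inverse b, Ring.inverse d] := by
      ext i j
      fin_cases i <;> fin_cases j <;>
        simp [J2, Ring.inverse_one, Matrix.vecHead, Matrix.vecTail]
    have step1 : IsUnit (!![1,1,1; 1, Ring.inverse a, Ring.inverse c;
          1, Ring.inverse b, Ring.inverse d] : Matrix (Fin 3) (Fin 3) R) ↔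
        IsUnit ((!![1,0,0;-1,1,0;0,-1,1] : Matrix (Fin 3) (Fin 3) R) *
          !![1,1,1; 1, Ring.inverse a, Ring.inverse c; 1, Ring.inverse b, Ring.inverse d]) :=
      (isUnit_mul_iff_left' isUnit_rowop _).symm
    have prod : (!![1,0,0;-1,1,0;0,-1,1] : Matrix (Fin 3) (Fin 3) R) *
        !![1,1,1; 1, Ring.inverse a, Ring.inverse c; 1, Ring.inverse b, Ring.inverse d] =
        !![1,1,1; 0, Ring.inverse a - 1, Ring.inverse c - 1;
           0, Ring.inverse b - Ring.inverse a, Ring.inverse d - Ring.inverse c] := by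
      rw [Matrix.mul_fin_three]
      ext i j
      fin_cases i <;> fin_cases j <;>
        simp [Matrix.vecHead, Matrix.vecTail] <;> noncomm_ring
    rw [hJ2, step1, prod, red3_upper, rowswap_iff, colswap_iff]
    have p1 : (Ring.inverse d - Ring.inverse c) * (-(c * (Ring.inverse (d-c) * d))) = 1 := by
      calc (Ring.inverse d - Ring.inverse c) * (-(c * (Ring.inverse (d-c) * d)))
          = (Ring.inverse c * c) * (Ring.inverse (d-c) * d) -
              Ring.inverse d * (c * (Ring.inverse (d-c) * d)) := by noncomm_ring
        _ = 1 * (Ring.inverse (d-c) * d) -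
              Ring.inverse d * (c * (Ring.inverse (d-c) * d)) := by rw [hc'c]
        _ = (Ring.inverse d * d) * (Ring.inverse (d-c) * d) -
              Ring.inverse d * (c * (Ring.inverse (d-c) * d)) := by rw [hd'd]
        _ = Ring.inverse d * (((d-c) * Ring.inverse (d-c)) * d) := by noncomm_ring
        _ = Ring.inverse d * (1 * d) := by rw [hdc1]
        _ = 1 := by rw [one_mul]; exact hd'd
    have p2 : (-(c * (Ring.inverse (d-c) * d))) * (Ring.inverse d - Ring.inverse c) = 1 := by
      calc (-(c * (Ring.inverse (d-c) * d))) * (Ring.inverse d - Ring.inverse c)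
          = c * (Ring.inverse (d-c) * (d * Ring.inverse c)) -
              c * (Ring.inverse (d-c) * (d * Ring.inverse d)) := by noncomm_ring
        _ = c * (Ring.inverse (d-c) * (d * Ring.inverse c)) -
              c * (Ring.inverse (d-c) * 1) := by rw [hdd']
        _ = c * (Ring.inverse (d-c) * (d * Ring.inverse c)) -
              c * (Ring.inverse (d-c) * (c * Ring.inverse c)) := by rw [hcc']
        _ = c * ((Ring.inverse (d-c) * (d-c)) * Ring.inverse c) := by noncomm_ring
        _ = c * (1 * Ring.inverse c) := by rw [hdc2]
        _ = 1 := by rw [one_mul]; exact hcc'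
    have hschur := schur_iff (⟨Ring.inverse d - Ring.inverse c,
        -(c * (Ring.inverse (d-c) * d)), p1, p2⟩ : Rˣ)
      (Ring.inverse b - Ring.inverse a) (Ring.inverse c - 1) (Ring.inverse a - 1)
    rw [show ((⟨Ring.inverse d - Ring.inverse c, -(c * (Ring.inverse (d-c) * d)), p1, p2⟩ :
        Rˣ) : R) = Ring.inverse d - Ring.inverse c from rfl] at hschur
    rw [hschur,
      show (((⟨Ring.inverse d - Ring.inverse c, -(c * (Ring.inverse (d-c) * d)), p1, p2⟩ :
        Rˣ)⁻¹ : Rˣ) : R) = -(c * (Ring.inverse (d-c) * d)) from rfl]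
    have H1 : Ring.inverse b * ((b-a) * Ring.inverse a) = Ring.inverse a - Ring.inverse b := by
      calc Ring.inverse b * ((b-a) * Ring.inverse a)
          = (Ring.inverse b * b) * Ring.inverse a -
              Ring.inverse b * (a * Ring.inverse a) := by noncomm_ring
        _ = 1 * Ring.inverse a - Ring.inverse b * 1 := by rw [hb'b, haa']
        _ = Ring.inverse a - Ring.inverse b := by noncomm_ring
    have H2 : (Ring.inverse c - 1) * c = 1 - c := by rw [sub_mul, hc'c, one_mul]
    have H3 : (a-1) * Ring.inverse a = 1 - Ring.inverse a := by rw [sub_mul, haa', one_mul]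
    have H4 : (a-1) * Ring.inverse (b-a) * b *
        (Ring.inverse b * ((b-a) * Ring.inverse a)) = (a-1) * Ring.inverse a := by
      calc (a-1) * Ring.inverse (b-a) * b * (Ring.inverse b * ((b-a) * Ring.inverse a))
          = (a-1) * (Ring.inverse (b-a) * ((b * Ring.inverse b) *
              ((b-a) * Ring.inverse a))) := by noncomm_ring
        _ = (a-1) * (Ring.inverse (b-a) * (1 * ((b-a) * Ring.inverse a))) := by rw [hbb']
        _ = (a-1) * ((Ring.inverse (b-a) * (b-a)) * Ring.inverse a) := by noncomm_ring
        _ = (a-1) * (1 * Ring.inverse a) := by rw [hba2]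
        _ = (a-1) * Ring.inverse a := by rw [one_mul]
    have main : (Ring.inverse a - 1) - (Ring.inverse c - 1) * (-(c * (Ring.inverse (d-c) * d))) *
        (Ring.inverse b - Ring.inverse a) =
        ((c - 1) * Ring.inverse (d - c) * d - (a - 1) * Ring.inverse (b - a) * b) *
          (Ring.inverse b * ((b-a) * Ring.inverse a)) := by
      calc (Ring.inverse a - 1) - (Ring.inverse c - 1) * (-(c * (Ring.inverse (d-c) * d))) *
            (Ring.inverse b - Ring.inverse a)
          = (Ring.inverse a - 1) + ((Ring.inverse c - 1) * c) *
              ((Ring.inverse (d-c) * d) * (Ring.inverse b - Ring.inverse a)) := by noncomm_ring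
        _ = (Ring.inverse a - 1) + (1 - c) *
              ((Ring.inverse (d-c) * d) * (Ring.inverse b - Ring.inverse a)) := by rw [H2]
        _ = (Ring.inverse a - 1) - (1 - c) *
              ((Ring.inverse (d-c) * d) * (Ring.inverse a - Ring.inverse b)) := by noncomm_ring
        _ = (Ring.inverse a - 1) - (1 - c) *
              ((Ring.inverse (d-c) * d) * (Ring.inverse b * ((b-a) * Ring.inverse a))) := by
            rw [H1]
        _ = (c - 1) * ((Ring.inverse (d-c) * d) *
              (Ring.inverse b * ((b-a) * Ring.inverse a))) + (Ring.inverse a - 1) := by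
            noncomm_ring
        _ = (c - 1) * ((Ring.inverse (d-c) * d) *
              (Ring.inverse b * ((b-a) * Ring.inverse a))) - (a-1) * Ring.inverse a := by
            rw [H3]; noncomm_ring
        _ = (c - 1) * ((Ring.inverse (d-c) * d) *
              (Ring.inverse b * ((b-a) * Ring.inverse a))) -
            (a-1) * Ring.inverse (b-a) * b *
              (Ring.inverse b * ((b-a) * Ring.inverse a)) := by rw [H4]
        _ = ((c - 1) * Ring.inverse (d - c) * d - (a - 1) * Ring.inverse (b - a) * b) *
              (Ring.inverse b * ((b-a) * Ring.inverse a)) := by noncomm_ring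
    rw [main]
    have Wp1 : (Ring.inverse b * ((b-a) * Ring.inverse a)) * (a * (Ring.inverse (b-a) * b)) = 1 := by
      calc (Ring.inverse b * ((b-a) * Ring.inverse a)) * (a * (Ring.inverse (b-a) * b))
          = Ring.inverse b * ((b-a) * ((Ring.inverse a * a) * (Ring.inverse (b-a) * b))) := by
            noncomm_ring
        _ = Ring.inverse b * ((b-a) * (1 * (Ring.inverse (b-a) * b))) := by rw [ha'a]
        _ = Ring.inverse b * (((b-a) * Ring.inverse (b-a)) * b) := by noncomm_ring
        _ = Ring.inverse b * (1 * b) := by rw [hba1]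
        _ = 1 := by rw [one_mul]; exact hb'b
    have Wp2 : (a * (Ring.inverse (b-a) * b)) * (Ring.inverse b * ((b-a) * Ring.inverse a)) = 1 := by
      calc (a * (Ring.inverse (b-a) * b)) * (Ring.inverse b * ((b-a) * Ring.inverse a))
          = a * (Ring.inverse (b-a) * ((b * Ring.inverse b) * ((b-a) * Ring.inverse a))) := by
            noncomm_ring
        _ = a * (Ring.inverse (b-a) * (1 * ((b-a) * Ring.inverse a))) := by rw [hbb']
        _ = a * ((Ring.inverse (b-a) * (b-a)) * Ring.inverse a) := by noncomm_ring
        _ = a * (1 * Ring.inverse a) := by rw [hba2]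
        _ = 1 := by rw [one_mul]; exact haa'
    exact isUnit_mul_iff_right ⟨⟨_, _, Wp1, Wp2⟩, rfl⟩ _
end

section
/- Let R be a unital associative ring and let M be a 3×3 matrix over R in S, i.e. every square submatrix of M is invertible and J₂(M) is invertible. Then M⁻¹ ∈ S: every square submatrix of M⁻¹ is invertible and J₂(M⁻¹) is invertible. -/
open Matrix

/-!
Jacobi's complementary minor formula holds verbatim over a noncommutative ring: if `M` is
invertible and the minor of `M` complementary to a square block of `M⁻¹` is invertible, then so is
that block, its inverse being the corresponding Schur complement in `M`. Since all minors of `M`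
are invertible, this makes every square submatrix of `M⁻¹` invertible.

For `J₂`, pivoting on the corner entry shows that, for `X` with invertible entries, `J₂(X)` is
invertible iff the `2 × 2` matrix `cornerSchur X` of Schur complements of the `2 × 2` minors through
the corner is. Jacobi's formula identifies `cornerSchur M⁻¹` with `J₂ (cornerSchur M)`, rows and
columns reversed, and a `2 × 2` matrix with invertible entries is invertible iff its `J₂` is.
-/

open scoped Ring
open Function

theorem Function.Injective.exists_bijective_sum_elim {p o : Type*} [Fintype p] [Fintype o]
    [DecidableEq o] {r : p → o} (hr : Injective r) :
    ∃ r' : Fin (Fintype.card o - Fintype.card p) → o, Bijective (Sum.elim r r') := by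
  have hcard : Fintype.card ((Set.range r)ᶜ : Set o) = Fintype.card o - Fintype.card p := by
    rw [Fintype.card_compl_set, Set.card_range_of_injective hr]
  let g := (Fintype.equivFinOfCardEq hcard).symm
  refine ⟨Subtype.val ∘ g, ?_⟩
  convert ((Equiv.ofInjective r hr).sumCongr g).trans (Equiv.Set.sumCompl _) |>.bijective
  ext (i | i) <;> rfl

namespace Matrix

theorem submatrix_sum_elim_eq_fromBlocks {α o p q : Type*} (M : Matrix o o α) (r : p → o)
    (r' : q → o) (c : p → o) (c' : q → o) :
    M.submatrix (Sum.elim r r') (Sum.elim c c') =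
      fromBlocks (M.submatrix r c) (M.submatrix r c') (M.submatrix r' c) (M.submatrix r' c') := by
  ext (i | i) (j | j) <;> rfl

variable {R : Type*} [Ring R]

section Unique

variable {ι : Type*} [Unique ι]

theorem mul_apply_of_unique [Fintype ι] (A B : Matrix ι ι R) (i j : ι) :
    (A * B) i j = A i j * B i j := by
  simp [mul_apply, Unique.eq_default i, Unique.eq_default j]

theorem one_apply_of_unique [DecidableEq ι] (i j : ι) : (1 : Matrix ι ι R) i j = 1 := by
  rw [Subsingleton.elim i j, one_apply_eq]

variable [Fintype ι] [DecidableEq ι]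

noncomputable def unitOfIsUnitApply (A : Matrix ι ι R) {i j : ι} (h : IsUnit (A i j)) :
    (Matrix ι ι R)ˣ where
  val := A
  inv := of fun _ _ => (A i j)⁻¹ʳ
  val_inv := by
    ext a b
    rw [mul_apply_of_unique, one_apply_of_unique, Subsingleton.elim a i, Subsingleton.elim b j]
    exact Ring.mul_inverse_cancel _ h
  inv_val := by
    ext a b
    rw [mul_apply_of_unique, one_apply_of_unique, Subsingleton.elim a i, Subsingleton.elim b j]
    exact Ring.inverse_mul_cancel _ h

theorem isUnit_iff_isUnit_apply_of_unique (A : Matrix ι ι R) (i j : ι) :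
    IsUnit A ↔ IsUnit (A i j) := by
  refine ⟨?_, fun h => (unitOfIsUnitApply A h).isUnit⟩
  rintro ⟨u, rfl⟩
  refine ⟨⟨_, (↑u⁻¹ : Matrix ι ι R) i j, ?_, ?_⟩, rfl⟩
  · rw [← mul_apply_of_unique, u.mul_inv, one_apply_of_unique]
  · rw [← mul_apply_of_unique, u.inv_mul, one_apply_of_unique]

theorem ringInverse_apply_of_unique (A : Matrix ι ι R) (i j : ι) :
    A⁻¹ʳ i j = (A i j)⁻¹ʳ := by
  by_cases h : IsUnit (A i j)
  · exact congr_fun₂ (Ring.inverse_unit (unitOfIsUnitApply A h)) i j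
  · rw [Ring.inverse_non_unit _ h,
      Ring.inverse_non_unit _ ((isUnit_iff_isUnit_apply_of_unique A i j).not.2 h)]
    rfl

end Unique

section Reindex

variable {m n : Type*} [Fintype m] [DecidableEq m] [Fintype n] [DecidableEq n]

theorem isUnit_diagonal_of_forall {v : n → R} (hv : ∀ i, IsUnit (v i)) : IsUnit (diagonal v) :=
  (Pi.isUnit_iff.2 hv).map (diagonalRingHom n R)

def submatrixEquivUnit (A : (Matrix m m R)ˣ) (e₁ e₂ : n ≃ m) : (Matrix n n R)ˣ where
  val := (A : Matrix m m R).submatrix e₁ e₂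
  inv := (↑A⁻¹ : Matrix m m R).submatrix e₂ e₁
  val_inv := by rw [submatrix_mul_equiv, A.mul_inv, submatrix_one_equiv]
  inv_val := by rw [submatrix_mul_equiv, A.inv_mul, submatrix_one_equiv]

theorem _root_.IsUnit.submatrix_equiv {A : Matrix m m R} (hA : IsUnit A) (e₁ e₂ : n ≃ m) :
    IsUnit (A.submatrix e₁ e₂) := by
  obtain ⟨u, rfl⟩ := hA
  exact (submatrixEquivUnit u e₁ e₂).isUnit

theorem isUnit_submatrix_equiv_iff {A : Matrix m m R} (e₁ e₂ : n ≃ m) :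
    IsUnit (A.submatrix e₁ e₂) ↔ IsUnit A :=
  ⟨fun h => by simpa using h.submatrix_equiv e₁.symm e₂.symm, fun h => h.submatrix_equiv e₁ e₂⟩

theorem ringInverse_submatrix_equiv {A : Matrix m m R} (hA : IsUnit A) (e₁ e₂ : n ≃ m) :
    (A.submatrix e₁ e₂)⁻¹ʳ = A⁻¹ʳ.submatrix e₂ e₁ := by
  obtain ⟨u, rfl⟩ := hA
  rw [Ring.inverse_unit u]
  exact Ring.inverse_unit (submatrixEquivUnit u e₁ e₂)

end Reindex

section Blocks

variable {m n : Type*} [Fintype m] [DecidableEq m] [Fintype n] [DecidableEq n]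
variable {A : Matrix m m R} {B : Matrix m n R} {C : Matrix n m R} {D : Matrix n n R}

theorem schur_mul_toBlocks₁₁_ringInverse (hD : IsUnit D) (hP : IsUnit (fromBlocks A B C D)) :
    (A - B * D⁻¹ʳ * C) * (fromBlocks A B C D)⁻¹ʳ.toBlocks₁₁ = 1 ∧
      (fromBlocks A B C D)⁻¹ʳ.toBlocks₁₁ * (A - B * D⁻¹ʳ * C) = 1 := by
  have hPQ := Ring.mul_inverse_cancel _ hP
  have hQP := Ring.inverse_mul_cancel _ hP
  set Q := (fromBlocks A B C D)⁻¹ʳ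
  rw [← fromBlocks_toBlocks Q, fromBlocks_multiply, ← fromBlocks_one, fromBlocks_inj] at hPQ hQP
  obtain ⟨h₁₁, -, h₂₁, -⟩ := hPQ
  obtain ⟨h₁₁', h₁₂', -, -⟩ := hQP
  have hG : D⁻¹ʳ * (C * Q.toBlocks₁₁) = -Q.toBlocks₂₁ := by
    rw [eq_neg_iff_add_eq_zero]
    calc D⁻¹ʳ * (C * Q.toBlocks₁₁) + Q.toBlocks₂₁
        = D⁻¹ʳ * (C * Q.toBlocks₁₁ + D * Q.toBlocks₂₁) := by
          rw [Matrix.mul_add, ← Matrix.mul_assoc D⁻¹ʳ D, Ring.inverse_mul_cancel _ hD,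
            Matrix.one_mul]
      _ = 0 := by rw [h₂₁, Matrix.mul_zero]
  have hF : Q.toBlocks₁₁ * B * D⁻¹ʳ = -Q.toBlocks₁₂ := by
    rw [eq_neg_iff_add_eq_zero]
    calc Q.toBlocks₁₁ * B * D⁻¹ʳ + Q.toBlocks₁₂
        = (Q.toBlocks₁₁ * B + Q.toBlocks₁₂ * D) * D⁻¹ʳ := by
          rw [Matrix.add_mul, Matrix.mul_assoc Q.toBlocks₁₂, Ring.mul_inverse_cancel _ hD,
            Matrix.mul_one]
      _ = 0 := by rw [h₁₂', Matrix.zero_mul]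
  constructor
  · rw [Matrix.sub_mul, Matrix.mul_assoc, Matrix.mul_assoc, hG, Matrix.mul_neg, sub_neg_eq_add,
      h₁₁]
  · rw [Matrix.mul_sub, ← Matrix.mul_assoc, ← Matrix.mul_assoc, hF, Matrix.neg_mul,
      sub_neg_eq_add, h₁₁']

theorem isUnit_fromBlocks_of_isUnit_schur (hD : IsUnit D) (hS : IsUnit (A - B * D⁻¹ʳ * C)) :
    IsUnit (fromBlocks A B C D) := by
  generalize hSdef : A - B * D⁻¹ʳ * C = S at hS
  obtain rfl : A = S + B * D⁻¹ʳ * C := by rw [← hSdef, sub_add_cancel]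
  have hD' : ∀ X : Matrix n m R, D * (D⁻¹ʳ * X) = X := fun X => by
    rw [← Matrix.mul_assoc, Ring.mul_inverse_cancel _ hD, Matrix.one_mul]
  have hS' : ∀ X : Matrix m n R, S * (S⁻¹ʳ * X) = X := fun X => by
    rw [← Matrix.mul_assoc, Ring.mul_inverse_cancel _ hS, Matrix.one_mul]
  refine ⟨⟨fromBlocks (S + B * D⁻¹ʳ * C) B C D, fromBlocks S⁻¹ʳ (-(S⁻¹ʳ * B * D⁻¹ʳ))
    (-(D⁻¹ʳ * C * S⁻¹ʳ)) (D⁻¹ʳ + D⁻¹ʳ * C * S⁻¹ʳ * B * D⁻¹ʳ), ?_, ?_⟩, rfl⟩ <;>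
  simp [fromBlocks_multiply, ← fromBlocks_one, Matrix.add_mul, Matrix.mul_add,
    Matrix.mul_assoc, hD', hS', Ring.mul_inverse_cancel _ hD, Ring.inverse_mul_cancel _ hD,
    Ring.mul_inverse_cancel _ hS, Ring.inverse_mul_cancel _ hS,
    Ring.mul_inverse_cancel_left _ _ hD]
  abel

theorem isUnit_fromBlocks_iff_of_isUnit₂₂ (hD : IsUnit D) :
    IsUnit (fromBlocks A B C D) ↔ IsUnit (A - B * D⁻¹ʳ * C) :=
  ⟨fun hP => let h := schur_mul_toBlocks₁₁_ringInverse hD hP; ⟨⟨_, _, h.1, h.2⟩, rfl⟩,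
    isUnit_fromBlocks_of_isUnit_schur hD⟩

theorem toBlocks₁₁_ringInverse_fromBlocks (hD : IsUnit D) (hP : IsUnit (fromBlocks A B C D)) :
    (fromBlocks A B C D)⁻¹ʳ.toBlocks₁₁ = (A - B * D⁻¹ʳ * C)⁻¹ʳ :=
  let h := schur_mul_toBlocks₁₁_ringInverse hD hP
  (Ring.inverse_unit ⟨_, _, h.1, h.2⟩).symm

end Blocks

section Jacobi

variable {o p q : Type*} [Fintype o] [DecidableEq o] [Fintype p] [DecidableEq p]
  [Fintype q] [DecidableEq q]

variable {M : Matrix o o R} {r c : p → o} {r' c' : q → o}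

theorem isUnit_schur_submatrix (hM : IsUnit M) (hr : Bijective (Sum.elim r r'))
    (hc : Bijective (Sum.elim c c')) (hD : IsUnit (M.submatrix c' r')) :
    IsUnit (M.submatrix c r - M.submatrix c r' * (M.submatrix c' r')⁻¹ʳ * M.submatrix c' r) := by
  have hP := hM.submatrix_equiv (.ofBijective _ hc) (.ofBijective _ hr)
  simp only [Equiv.coe_ofBijective, submatrix_sum_elim_eq_fromBlocks] at hP
  exact (isUnit_fromBlocks_iff_of_isUnit₂₂ hD).1 hP

/-- Jacobi's complementary minor formula, over a noncommutative ring. -/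
theorem submatrix_ringInverse_eq (hM : IsUnit M) (hr : Bijective (Sum.elim r r'))
    (hc : Bijective (Sum.elim c c')) (hD : IsUnit (M.submatrix c' r')) :
    M⁻¹ʳ.submatrix r c =
      (M.submatrix c r - M.submatrix c r' * (M.submatrix c' r')⁻¹ʳ * M.submatrix c' r)⁻¹ʳ := by
  have hP := hM.submatrix_equiv (.ofBijective _ hc) (.ofBijective _ hr)
  have hPinv := ringInverse_submatrix_equiv hM (.ofBijective _ hc) (.ofBijective _ hr)
  simp only [Equiv.coe_ofBijective, submatrix_sum_elim_eq_fromBlocks] at hP hPinv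
  rw [← toBlocks₁₁_ringInverse_fromBlocks hD hP, hPinv, toBlocks_fromBlocks₁₁]

end Jacobi

section LastPivot

variable {n : ℕ}

noncomputable def lastSchur (Y : Matrix (Fin (n + 1)) (Fin (n + 1)) R) :
    Matrix (Fin n) (Fin n) R :=
  of fun j k => Y j.castSucc k.castSucc -
    Y j.castSucc (Fin.last n) * (Y (Fin.last n) (Fin.last n))⁻¹ʳ * Y (Fin.last n) k.castSucc

theorem bijective_sum_elim_castSucc_last :
    Bijective (Sum.elim Fin.castSucc fun _ : Fin 1 => Fin.last n) := by
  convert (finSumFinEquiv (m := n) (n := 1)).bijective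
  ext (i | i) <;> simp

theorem isUnit_submatrix_last_last {Y : Matrix (Fin (n + 1)) (Fin (n + 1)) R}
    (h : IsUnit (Y (Fin.last n) (Fin.last n))) :
    IsUnit (Y.submatrix (fun _ : Fin 1 => Fin.last n) fun _ : Fin 1 => Fin.last n) :=
  (isUnit_iff_isUnit_apply_of_unique _ 0 0).2 h

theorem lastSchur_eq_schur_submatrix (Y : Matrix (Fin (n + 1)) (Fin (n + 1)) R) :
    lastSchur Y = Y.submatrix Fin.castSucc Fin.castSucc -
      Y.submatrix Fin.castSucc (fun _ : Fin 1 => Fin.last n) *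
        (Y.submatrix (fun _ : Fin 1 => Fin.last n) fun _ : Fin 1 => Fin.last n)⁻¹ʳ *
          Y.submatrix (fun _ : Fin 1 => Fin.last n) Fin.castSucc := by
  ext j k
  simp [lastSchur, mul_apply, ringInverse_apply_of_unique]

theorem isUnit_iff_isUnit_lastSchur {Y : Matrix (Fin (n + 1)) (Fin (n + 1)) R}
    (h : IsUnit (Y (Fin.last n) (Fin.last n))) : IsUnit Y ↔ IsUnit (lastSchur Y) := by
  rw [lastSchur_eq_schur_submatrix,
    ← isUnit_fromBlocks_iff_of_isUnit₂₂ (isUnit_submatrix_last_last h),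
    ← submatrix_sum_elim_eq_fromBlocks]
  exact (isUnit_submatrix_equiv_iff (.ofBijective _ bijective_sum_elim_castSucc_last)
    (.ofBijective _ bijective_sum_elim_castSucc_last)).symm

theorem ringInverse_lastSchur {Y : Matrix (Fin (n + 1)) (Fin (n + 1)) R} (hY : IsUnit Y)
    (h : IsUnit (Y (Fin.last n) (Fin.last n))) :
    (lastSchur Y)⁻¹ʳ = Y⁻¹ʳ.submatrix Fin.castSucc Fin.castSucc := by
  rw [submatrix_ringInverse_eq hY bijective_sum_elim_castSucc_last
    bijective_sum_elim_castSucc_last (isUnit_submatrix_last_last h), lastSchur_eq_schur_submatrix]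

theorem lastSchur_apply_of_fin_two {Y : Matrix (Fin 2) (Fin 2) R} (hY : IsUnit Y)
    (h : IsUnit (Y 1 1)) : lastSchur Y 0 0 = (Y⁻¹ʳ 0 0)⁻¹ʳ := by
  have hS : IsUnit (lastSchur Y 0 0) :=
    (isUnit_iff_isUnit_apply_of_unique _ 0 0).1 ((isUnit_iff_isUnit_lastSchur h).1 hY)
  have h00 := congr_fun₂ (ringInverse_lastSchur hY h) 0 0
  rw [ringInverse_apply_of_unique] at h00
  rw [← Ring.inverse_inverse hS, h00]
  rfl

end LastPivot

end Matrix

open Matrix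

section CornerSchur

variable {R : Type*} [Ring R] {n : ℕ}

/-- Transposed like `J₂`: the entry `(j, k)` comes from the minor on rows `k, last` and columns
`j, last`. -/
noncomputable def cornerSchur (X : Matrix (Fin (n + 1)) (Fin (n + 1)) R) :
    Matrix (Fin n) (Fin n) R :=
  of fun j k => X (Fin.last n) (Fin.last n) -
    X (Fin.last n) j.castSucc * (X k.castSucc j.castSucc)⁻¹ʳ * X k.castSucc (Fin.last n)

theorem cornerSchur_apply (X : Matrix (Fin (n + 1)) (Fin (n + 1)) R) (j k : Fin n) :
    cornerSchur X j k =
      lastSchur (X.submatrix ![Fin.last n, k.castSucc] ![Fin.last n, j.castSucc]) 0 0 :=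
  rfl

theorem lastSchur_J2 {X : Matrix (Fin (n + 1)) (Fin (n + 1)) R} (hX : ∀ i j, IsUnit (X i j)) :
    lastSchur (J2 X) = -(diagonal (fun j => (X (Fin.last n) j.castSucc)⁻¹ʳ) * cornerSchur X *
      diagonal fun k => (X k.castSucc (Fin.last n))⁻¹ʳ) := by
  ext j k
  simp only [lastSchur, J2, cornerSchur, of_apply, Matrix.neg_apply, mul_diagonal, diagonal_mul,
    Ring.inverse_inverse (hX _ _), mul_sub, sub_mul, neg_sub]
  simp only [mul_assoc, Ring.inverse_mul_cancel_left _ _ (hX _ _),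
    Ring.mul_inverse_cancel _ (hX _ _), mul_one]

theorem isUnit_J2_iff_isUnit_cornerSchur {X : Matrix (Fin (n + 1)) (Fin (n + 1)) R}
    (hX : ∀ i j, IsUnit (X i j)) : IsUnit (J2 X) ↔ IsUnit (cornerSchur X) := by
  rw [isUnit_iff_isUnit_lastSchur (hX _ _).ringInverse, lastSchur_J2 hX, IsUnit.neg_iff,
    IsUnit.mul_right_iff (isUnit_diagonal_of_forall fun _ => (hX _ _).ringInverse),
    IsUnit.mul_left_iff (isUnit_diagonal_of_forall fun _ => (hX _ _).ringInverse)]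

theorem cornerSchur_eq_lastSchur_submatrix_rev (W : Matrix (Fin 2) (Fin 2) R) :
    cornerSchur W = lastSchur (W.submatrix Fin.revPerm Fin.revPerm) := by
  ext i j
  fin_cases i; fin_cases j
  rfl

theorem isUnit_J2_iff_of_fin_two {W : Matrix (Fin 2) (Fin 2) R} (hW : ∀ i j, IsUnit (W i j)) :
    IsUnit (J2 W) ↔ IsUnit W := by
  rw [isUnit_J2_iff_isUnit_cornerSchur hW, cornerSchur_eq_lastSchur_submatrix_rev,
    ← isUnit_iff_isUnit_lastSchur (hW 0 0), isUnit_submatrix_equiv_iff]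

theorem isUnit_cornerSchur_apply {X : Matrix (Fin (n + 1)) (Fin (n + 1)) R} {j k : Fin n}
    (hY : IsUnit (X.submatrix ![Fin.last n, k.castSucc] ![Fin.last n, j.castSucc]))
    (hX : IsUnit (X k.castSucc j.castSucc)) : IsUnit (cornerSchur X j k) := by
  rw [cornerSchur_apply, ← isUnit_iff_isUnit_apply_of_unique]
  exact (isUnit_iff_isUnit_lastSchur hX).1 hY

end CornerSchur

section Inverse

variable {R : Type*} [Ring R]

theorem isUnit_submatrix_ringInverse_of_forall {n : ℕ} {M : Matrix (Fin n) (Fin n) R}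
    (hM : ∀ (k : ℕ) (r c : Fin k → Fin n), Injective r → Injective c → IsUnit (M.submatrix r c))
    (k : ℕ) (r c : Fin k → Fin n) (hr : Injective r) (hc : Injective c) :
    IsUnit (M⁻¹ʳ.submatrix r c) := by
  obtain ⟨r', hr'⟩ := hr.exists_bijective_sum_elim
  obtain ⟨c', hc'⟩ := hc.exists_bijective_sum_elim
  have hMu : IsUnit M := by simpa using hM n id id injective_id injective_id
  have hD :=
    hM _ c' r' (hc'.injective.comp Sum.inr_injective) (hr'.injective.comp Sum.inr_injective)
  rw [submatrix_ringInverse_eq hMu hr' hc' hD]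
  exact (isUnit_schur_submatrix hMu hr' hc' hD).ringInverse

theorem cornerSchur_ringInverse {M : Matrix (Fin 3) (Fin 3) R} (hM : IsUnit M)
    (hM₁ : ∀ i j, IsUnit (M i j)) (hN₁ : ∀ i j, IsUnit (M⁻¹ʳ i j)) :
    cornerSchur M⁻¹ʳ = (J2 (cornerSchur M)).submatrix Fin.revPerm Fin.revPerm := by
  have hbij : ∀ k : Fin 2,
      Bijective (Sum.elim ![Fin.last 2, k.castSucc] ![k.rev.castSucc] : Fin 2 ⊕ Fin 1 → Fin 3) :=
    by decide
  ext j k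
  have hD : IsUnit (M.submatrix ![j.rev.castSucc] ![k.rev.castSucc]) :=
    (isUnit_iff_isUnit_apply_of_unique _ 0 0).2 (hM₁ _ _)
  have hY : IsUnit (M⁻¹ʳ.submatrix ![Fin.last 2, k.castSucc] ![Fin.last 2, j.castSucc]) := by
    rw [submatrix_ringInverse_eq hM (hbij k) (hbij j) hD]
    exact (isUnit_schur_submatrix hM (hbij k) (hbij j) hD).ringInverse
  rw [cornerSchur_apply, lastSchur_apply_of_fin_two hY (hN₁ _ _),
    submatrix_ringInverse_eq hM (hbij k) (hbij j) hD,
    Ring.inverse_inverse (isUnit_schur_submatrix hM (hbij k) (hbij j) hD)]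
  simp only [J2, cornerSchur, of_apply, submatrix_apply, Matrix.sub_apply, mul_apply,
    Fin.sum_univ_one, ringInverse_apply_of_unique]
  rfl

end Inverse

/-- If `M` is a `3×3` matrix in `S` (all square submatrices of `M`
invertible and `J₂(M)` invertible), then `M⁻¹ ∈ S`. -/
theorem inverse_mem_S {R : Type*} [Ring R] (M : Matrix (Fin 3) (Fin 3) R)
    (hM : M ∈ Sset R) : Ring.inverse M ∈ Sset R := by
  obtain ⟨hsub, hJ⟩ := hM
  have hMu : IsUnit M := by simpa using hsub 3 id id injective_id injective_id
  have hNsub : allSquareSubInv M⁻¹ʳ := isUnit_submatrix_ringInverse_of_forall hsub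
  have entries {X : Matrix (Fin 3) (Fin 3) R} (hX : allSquareSubInv X) (i j : Fin 3) :
      IsUnit (X i j) :=
    (isUnit_iff_isUnit_apply_of_unique _ 0 0).1
      (hX 1 ![i] ![j] (injective_of_subsingleton _) (injective_of_subsingleton _))
  have hcorner : ∀ j k, IsUnit (cornerSchur M j k) := fun j k =>
    isUnit_cornerSchur_apply (hsub 2 _ _ (by decide +revert) (by decide +revert))
      (entries hsub _ _)
  refine ⟨hNsub, ?_⟩
  rw [isUnit_J2_iff_isUnit_cornerSchur (entries hNsub),
    cornerSchur_ringInverse hMu (entries hsub) (entries hNsub), isUnit_submatrix_equiv_iff,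
    isUnit_J2_iff_of_fin_two hcorner, ← isUnit_J2_iff_isUnit_cornerSchur (entries hsub)]
  exact hJ
end

section
/- Let R be a unital associative ring and let A = [[1,1,1],[1,a,b],[1,c,d]] be a 3×3 matrix in Ŝ. Write Φ(A) = [[1,1,1],[1,a',b'],[1,c',d']] and Φ⁻¹(A) = [[1,1,1],[1,a°,b°],[1,c°,d°]]. Then the entries of Φ(A) are given by the closed formulas a' = (d−1)⁻¹(d−c)a⁻¹(db⁻¹−ca⁻¹)⁻¹(db⁻¹−1), b' = (c−1)⁻¹(d−c)b⁻¹(db⁻¹−ca⁻¹)⁻¹(ca⁻¹−1), c' = (b−1)⁻¹(b−a)a⁻¹(db⁻¹−ca⁻¹)⁻¹(db⁻¹−1), d' = (a−1)⁻¹(b−a)b⁻¹(db⁻¹−ca⁻¹)⁻¹(ca⁻¹−1); and the (2,2) entry of Φ⁻¹(A) is a° = (d−1)(d−c)⁻¹(db⁻¹−ca⁻¹)(db⁻¹−1)⁻¹. -/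
open Matrix

section AuxLemmas

variable {R : Type*} [Ring R]

theorem myRinvEq {x y : R} (h1 : x * y = 1) (h2 : y * x = 1) : Ring.inverse x = y :=
  Ring.inverse_unit ⟨x, y, h1, h2⟩

theorem myRinvUnit {x : R} (h : IsUnit x) : IsUnit (Ring.inverse x) := by
  obtain ⟨u, rfl⟩ := h
  rw [Ring.inverse_unit]
  exact Units.isUnit _

theorem myLeftCancel {x xi y z : R} (hxi : xi * x = 1) (h : x * y = z) : y = xi * z := by
  rw [← h, ← mul_assoc, hxi, one_mul]

theorem myRightCancel {x xi y z : R} (hxi : x * xi = 1) (h : y * x = z) : y = z * xi := by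
  rw [← h, mul_assoc, hxi, mul_one]

theorem myEq22 {w x y z w' x' y' z' : R} (h1 : w = w') (h2 : x = x') (h3 : y = y')
    (h4 : z = z') : !![w,x;y,z] = !![w',x';y',z'] := by
  rw [h1, h2, h3, h4]

theorem myInv4 {p pi q qi r ri s si : R} (hp1 : p * pi = 1) (hp2 : pi * p = 1)
    (hq1 : q * qi = 1) (hq2 : qi * q = 1) (hr1 : r * ri = 1) (hr2 : ri * r = 1)
    (hs1 : s * si = 1) (hs2 : si * s = 1) :
    Ring.inverse (p * qi * r * si) = s * ri * q * pi := by
  apply myRinvEq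
  · calc p * qi * r * si * (s * ri * q * pi)
        = p * (qi * (r * ((si * s) * (ri * (q * pi))))) := by noncomm_ring
      _ = p * (qi * ((r * ri) * (q * pi))) := by rw [hs2]; noncomm_ring
      _ = p * ((qi * q) * pi) := by rw [hr1]; noncomm_ring
      _ = p * pi := by rw [hq2]; noncomm_ring
      _ = 1 := hp1
  · calc s * ri * q * pi * (p * qi * r * si)
        = s * (ri * (q * ((pi * p) * (qi * (r * si))))) := by noncomm_ring
      _ = s * (ri * ((q * qi) * (r * si))) := by rw [hp2]; noncomm_ring
      _ = s * ((ri * r) * si) := by rw [hq1]; noncomm_ring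
      _ = s * si := by rw [hr2]; noncomm_ring
      _ = 1 := hs1

theorem myUnit1x1 {M : Matrix (Fin 1) (Fin 1) R} (h : IsUnit M) : IsUnit (M 0 0) := by
  obtain ⟨u, hu⟩ := h
  set N : Matrix (Fin 1) (Fin 1) R := Units.val u⁻¹ with hN
  have h1 : M * N = 1 := by rw [hN, ← hu, Units.mul_inv]
  have h2 : N * M = 1 := by rw [hN, ← hu, Units.inv_mul]
  have e1 := congrFun (congrFun h1 0) 0
  have e2 := congrFun (congrFun h2 0) 0
  simp [Matrix.mul_apply, Matrix.one_apply] at e1 e2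
  exact ⟨⟨M 0 0, N 0 0, e1, e2⟩, rfl⟩

theorem myIsUnit22 {p q r t : R} (hp : IsUnit p) (hs : IsUnit (t - r * Ring.inverse p * q)) :
    IsUnit (!![p, q; r, t]) := by
  set pi := Ring.inverse p with hpi
  set s := t - r * pi * q with hsdef
  set si := Ring.inverse s with hsi
  have hp1 : p * pi = 1 := Ring.mul_inverse_cancel p hp
  have hp2 : pi * p = 1 := Ring.inverse_mul_cancel p hp
  have hs1 : s * si = 1 := Ring.mul_inverse_cancel s hs
  have hs2 : si * s = 1 := Ring.inverse_mul_cancel s hs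
  have hT : IsUnit (!![(1:R), 0; r * pi, 1]) := by
    refine ⟨⟨_, !![(1:R), 0; -(r * pi), 1], ?_, ?_⟩, rfl⟩ <;>
      rw [Matrix.mul_fin_two, Matrix.one_fin_two] <;>
      exact myEq22 (by noncomm_ring) (by noncomm_ring) (by noncomm_ring) (by noncomm_ring)
  have hU : IsUnit (!![p, q; 0, s]) := by
    refine ⟨⟨_, !![pi, -(pi * (q * si)); 0, si], ?_, ?_⟩, rfl⟩ <;>
      rw [Matrix.mul_fin_two, Matrix.one_fin_two]
    · refine myEq22 (by rw [mul_zero, add_zero, hp1]) ?_ (by noncomm_ring)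
        (by rw [zero_mul, zero_add, hs1])
      calc p * -(pi * (q * si)) + q * si = -((p * pi) * (q * si)) + q * si := by noncomm_ring
      _ = 0 := by rw [hp1]; noncomm_ring
    · refine myEq22 (by rw [mul_zero, add_zero, hp2]) ?_ (by noncomm_ring)
        (by rw [zero_mul, zero_add, hs2])
      calc pi * q + -(pi * (q * si)) * s = pi * q - pi * (q * (si * s)) := by noncomm_ring
      _ = 0 := by rw [hs2, mul_one, sub_self]
  have key : !![p, q; r, t] = !![(1:R), 0; r * pi, 1] * !![p, q; 0, s] := by
    rw [Matrix.mul_fin_two]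
    refine myEq22 (by noncomm_ring) (by noncomm_ring) ?_ (by rw [hsdef]; noncomm_ring)
    calc r = r * (pi * p) := by rw [hp2, mul_one]
    _ = r * pi * p + 1 * 0 := by noncomm_ring
  rw [key]; exact hT.mul hU

theorem myIsUnit22' {p q r t : R} (ht : IsUnit t) (hs : IsUnit (p - q * Ring.inverse t * r)) :
    IsUnit (!![p, q; r, t]) := by
  have h := myIsUnit22 ht hs
  have hE : IsUnit (!![(0:R), 1; 1, 0]) := by
    refine ⟨⟨_, !![(0:R), 1; 1, 0], ?_, ?_⟩, rfl⟩ <;>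
      rw [Matrix.mul_fin_two, Matrix.one_fin_two] <;>
      exact myEq22 (by noncomm_ring) (by noncomm_ring) (by noncomm_ring) (by noncomm_ring)
  have key : !![p, q; r, t] = !![(0:R), 1; 1, 0] * !![t, r; q, p] * !![(0:R), 1; 1, 0] := by
    rw [Matrix.mul_fin_two, Matrix.mul_fin_two]
    exact myEq22 (by noncomm_ring) (by noncomm_ring) (by noncomm_ring) (by noncomm_ring)
  rw [key]; exact (hE.mul h).mul hE

theorem mySchur22 {p q r t : R} (h : IsUnit (!![p, q; r, t])) (hp : IsUnit p) :
    IsUnit (t - r * Ring.inverse p * q) := by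
  set pi := Ring.inverse p with hpi
  have hp1 : p * pi = 1 := Ring.mul_inverse_cancel p hp
  have hp2 : pi * p = 1 := Ring.inverse_mul_cancel p hp
  have hT : IsUnit (!![(1:R), 0; -(r * pi), 1]) := by
    refine ⟨⟨_, !![(1:R), 0; r * pi, 1], ?_, ?_⟩, rfl⟩ <;>
      rw [Matrix.mul_fin_two, Matrix.one_fin_two] <;>
      exact myEq22 (by noncomm_ring) (by noncomm_ring) (by noncomm_ring) (by noncomm_ring)
  have hM2 : IsUnit (!![(1:R), 0; -(r * pi), 1] * !![p, q; r, t]) := hT.mul h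
  have key : !![(1:R), 0; -(r * pi), 1] * !![p, q; r, t] = !![p, q; 0, t - r * pi * q] := by
    rw [Matrix.mul_fin_two]
    refine myEq22 (by noncomm_ring) (by noncomm_ring) ?_ (by noncomm_ring)
    calc -(r * pi) * p + 1 * r = -(r * (pi * p)) + r := by noncomm_ring
    _ = 0 := by rw [hp2, mul_one, neg_add_cancel]
  rw [key] at hM2
  obtain ⟨u, hu⟩ := hM2
  set N : Matrix (Fin 2) (Fin 2) R := Units.val u⁻¹ with hN
  have h1 : !![p, q; 0, t - r * pi * q] * N = 1 := by rw [hN, ← hu, Units.mul_inv]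
  have h2 : N * !![p, q; 0, t - r * pi * q] = 1 := by rw [hN, ← hu, Units.inv_mul]
  have e10 := congrFun (congrFun h2 1) 0
  have e11 := congrFun (congrFun h2 1) 1
  have f11 := congrFun (congrFun h1 1) 1
  simp [Matrix.mul_apply, Fin.sum_univ_two, Matrix.one_apply] at e10 e11 f11
  have hN10 : N 1 0 = 0 := by
    calc N 1 0 = (N 1 0 * p) * pi := by rw [mul_assoc, hp1, mul_one]
    _ = 0 := by rw [e10, zero_mul]
  rw [hN10, zero_mul, zero_add] at e11
  exact ⟨⟨_, N 1 1, f11, e11⟩, rfl⟩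

theorem myCorner3 {M B : Matrix (Fin 3) (Fin 3) R} (hMB : M * B = 1) (hBM : B * M = 1)
    (hH : IsUnit (!![M 0 0, M 0 1; M 1 0, M 1 1])) : IsUnit (B 2 2) := by
  obtain ⟨u, hu⟩ := hH
  set N : Matrix (Fin 2) (Fin 2) R := Units.val u⁻¹ with hN
  have h1 : !![M 0 0, M 0 1; M 1 0, M 1 1] * N = 1 := by rw [hN, ← hu, Units.mul_inv]
  have h2 : N * !![M 0 0, M 0 1; M 1 0, M 1 1] = 1 := by rw [hN, ← hu, Units.inv_mul]
  have g00 := congrFun (congrFun h2 0) 0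
  have g01 := congrFun (congrFun h2 0) 1
  have g10 := congrFun (congrFun h2 1) 0
  have g11 := congrFun (congrFun h2 1) 1
  have k00 := congrFun (congrFun h1 0) 0
  have k01 := congrFun (congrFun h1 0) 1
  have k10 := congrFun (congrFun h1 1) 0
  have k11 := congrFun (congrFun h1 1) 1
  simp [Matrix.mul_apply, Fin.sum_univ_two, Matrix.one_apply] at g00 g01 g10 g11 k00 k01 k10 k11
  have e02 := congrFun (congrFun hMB 0) 2
  have e12 := congrFun (congrFun hMB 1) 2
  have e22 := congrFun (congrFun hMB 2) 2
  have f20 := congrFun (congrFun hBM 2) 0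
  have f21 := congrFun (congrFun hBM 2) 1
  have f22 := congrFun (congrFun hBM 2) 2
  simp [Matrix.mul_apply, Fin.sum_univ_three, Matrix.one_apply] at e02 e12 e22 f20 f21 f22
  set z := B 2 2
  have c1 : M 0 0 * B 0 2 + M 0 1 * B 1 2 = -(M 0 2 * z) := by
    calc M 0 0 * B 0 2 + M 0 1 * B 1 2
        = (M 0 0 * B 0 2 + M 0 1 * B 1 2 + M 0 2 * B 2 2) - M 0 2 * z := by noncomm_ring
      _ = -(M 0 2 * z) := by rw [e02]; noncomm_ring
  have c2 : M 1 0 * B 0 2 + M 1 1 * B 1 2 = -(M 1 2 * z) := by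
    calc M 1 0 * B 0 2 + M 1 1 * B 1 2
        = (M 1 0 * B 0 2 + M 1 1 * B 1 2 + M 1 2 * B 2 2) - M 1 2 * z := by noncomm_ring
      _ = -(M 1 2 * z) := by rw [e12]; noncomm_ring
  have hB02 : B 0 2 = -((N 0 0 * M 0 2 + N 0 1 * M 1 2) * z) := by
    calc B 0 2 = (N 0 0 * M 0 0 + N 0 1 * M 1 0) * B 0 2
          + (N 0 0 * M 0 1 + N 0 1 * M 1 1) * B 1 2 := by rw [g00, g01]; noncomm_ring
      _ = N 0 0 * (M 0 0 * B 0 2 + M 0 1 * B 1 2) + N 0 1 * (M 1 0 * B 0 2 + M 1 1 * B 1 2) := by noncomm_ring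
      _ = N 0 0 * -(M 0 2 * z) + N 0 1 * -(M 1 2 * z) := by rw [c1, c2]
      _ = -((N 0 0 * M 0 2 + N 0 1 * M 1 2) * z) := by noncomm_ring
  have hB12 : B 1 2 = -((N 1 0 * M 0 2 + N 1 1 * M 1 2) * z) := by
    calc B 1 2 = (N 1 0 * M 0 0 + N 1 1 * M 1 0) * B 0 2
          + (N 1 0 * M 0 1 + N 1 1 * M 1 1) * B 1 2 := by rw [g10, g11]; noncomm_ring
      _ = N 1 0 * (M 0 0 * B 0 2 + M 0 1 * B 1 2) + N 1 1 * (M 1 0 * B 0 2 + M 1 1 * B 1 2) := by noncomm_ring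
      _ = N 1 0 * -(M 0 2 * z) + N 1 1 * -(M 1 2 * z) := by rw [c1, c2]
      _ = -((N 1 0 * M 0 2 + N 1 1 * M 1 2) * z) := by noncomm_ring
  set w := M 2 2 - (M 2 0 * (N 0 0 * M 0 2 + N 0 1 * M 1 2)
      + M 2 1 * (N 1 0 * M 0 2 + N 1 1 * M 1 2)) with hw
  have hwz : w * z = 1 := by
    calc w * z = M 2 0 * -((N 0 0 * M 0 2 + N 0 1 * M 1 2) * z)
          + M 2 1 * -((N 1 0 * M 0 2 + N 1 1 * M 1 2) * z) + M 2 2 * z := by rw [hw]; noncomm_ring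
      _ = M 2 0 * B 0 2 + M 2 1 * B 1 2 + M 2 2 * z := by rw [hB02, hB12]
      _ = 1 := e22
  have d1 : B 2 0 * M 0 0 + B 2 1 * M 1 0 = -(z * M 2 0) := by
    calc B 2 0 * M 0 0 + B 2 1 * M 1 0
        = (B 2 0 * M 0 0 + B 2 1 * M 1 0 + B 2 2 * M 2 0) - z * M 2 0 := by noncomm_ring
      _ = -(z * M 2 0) := by rw [f20]; noncomm_ring
  have d2 : B 2 0 * M 0 1 + B 2 1 * M 1 1 = -(z * M 2 1) := by
    calc B 2 0 * M 0 1 + B 2 1 * M 1 1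
        = (B 2 0 * M 0 1 + B 2 1 * M 1 1 + B 2 2 * M 2 1) - z * M 2 1 := by noncomm_ring
      _ = -(z * M 2 1) := by rw [f21]; noncomm_ring
  have hB20 : B 2 0 = -(z * (M 2 0 * N 0 0 + M 2 1 * N 1 0)) := by
    calc B 2 0 = B 2 0 * (M 0 0 * N 0 0 + M 0 1 * N 1 0)
          + B 2 1 * (M 1 0 * N 0 0 + M 1 1 * N 1 0) := by rw [k00, k10]; noncomm_ring
      _ = (B 2 0 * M 0 0 + B 2 1 * M 1 0) * N 0 0 + (B 2 0 * M 0 1 + B 2 1 * M 1 1) * N 1 0 := by noncomm_ring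
      _ = -(z * M 2 0) * N 0 0 + -(z * M 2 1) * N 1 0 := by rw [d1, d2]
      _ = -(z * (M 2 0 * N 0 0 + M 2 1 * N 1 0)) := by noncomm_ring
  have hB21 : B 2 1 = -(z * (M 2 0 * N 0 1 + M 2 1 * N 1 1)) := by
    calc B 2 1 = B 2 0 * (M 0 0 * N 0 1 + M 0 1 * N 1 1)
          + B 2 1 * (M 1 0 * N 0 1 + M 1 1 * N 1 1) := by rw [k01, k11]; noncomm_ring
      _ = (B 2 0 * M 0 0 + B 2 1 * M 1 0) * N 0 1 + (B 2 0 * M 0 1 + B 2 1 * M 1 1) * N 1 1 := by noncomm_ring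
      _ = -(z * M 2 0) * N 0 1 + -(z * M 2 1) * N 1 1 := by rw [d1, d2]
      _ = -(z * (M 2 0 * N 0 1 + M 2 1 * N 1 1)) := by noncomm_ring
  have hzw : z * w = 1 := by
    calc z * w = -(z * (M 2 0 * N 0 0 + M 2 1 * N 1 0)) * M 0 2
          + -(z * (M 2 0 * N 0 1 + M 2 1 * N 1 1)) * M 1 2 + z * M 2 2 := by rw [hw]; noncomm_ring
      _ = B 2 0 * M 0 2 + B 2 1 * M 1 2 + z * M 2 2 := by rw [hB20, hB21]
      _ = 1 := f22
  exact ⟨⟨z, w, hzw, hwz⟩, rfl⟩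

theorem myEntryUnit {M B : Matrix (Fin 3) (Fin 3) R} (hMB : M * B = 1) (hBM : B * M = 1)
    (er ec : Fin 3 ≃ Fin 3)
    (hH : IsUnit (!![M (er 0) (ec 0), M (er 0) (ec 1); M (er 1) (ec 0), M (er 1) (ec 1)])) :
    IsUnit (B (ec 2) (er 2)) := by
  have h1 : (M.submatrix er ec) * (B.submatrix ec er) = 1 := by
    rw [Matrix.submatrix_mul_equiv, hMB, Matrix.submatrix_one_equiv]
  have h2 : (B.submatrix ec er) * (M.submatrix er ec) = 1 := by
    rw [Matrix.submatrix_mul_equiv, hBM, Matrix.submatrix_one_equiv]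
  have := myCorner3 h1 h2 (by simpa [Matrix.submatrix_apply] using hH)
  simpa [Matrix.submatrix_apply] using this

def myE1 : Fin 3 ≃ Fin 3 := ⟨![0,2,1], ![0,2,1], by decide, by decide⟩
def myE2 : Fin 3 ≃ Fin 3 := ⟨![1,2,0], ![2,0,1], by decide, by decide⟩

end AuxLemmas

set_option maxHeartbeats 3000000 in
/-- Closed formulas for the entries of `Φ(A)` and for the `(2,2)`
entry of `Φ⁻¹(A)`, for `A = [[1,1,1],[1,a,b],[1,c,d]] ∈ Ŝ`. Here `a' = Φ(A)₂₂`,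
`b' = Φ(A)₂₃`, `c' = Φ(A)₃₂`, `d' = Φ(A)₃₃`, and `a° = Φ⁻¹(A)₂₂` (indices `1,2` in
`Fin 3` correspond to the second and third rows/columns). -/

theorem closed_formulas_Phi {R : Type*} [Ring R] (a b c d : R)
    (hA : (!![1, 1, 1; 1, a, b; 1, c, d] : Matrix (Fin 3) (Fin 3) R) ∈ Shat R) :
    Phi (!![1, 1, 1; 1, a, b; 1, c, d] : Matrix (Fin 3) (Fin 3) R) 1 1 =
      Ring.inverse (d - 1) * (d - c) * Ring.inverse a *
        Ring.inverse (d * Ring.inverse b - c * Ring.inverse a) *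
        (d * Ring.inverse b - 1) ∧
    Phi (!![1, 1, 1; 1, a, b; 1, c, d] : Matrix (Fin 3) (Fin 3) R) 1 2 =
      Ring.inverse (c - 1) * (d - c) * Ring.inverse b *
        Ring.inverse (d * Ring.inverse b - c * Ring.inverse a) *
        (c * Ring.inverse a - 1) ∧
    Phi (!![1, 1, 1; 1, a, b; 1, c, d] : Matrix (Fin 3) (Fin 3) R) 2 1 =
      Ring.inverse (b - 1) * (b - a) * Ring.inverse a *
        Ring.inverse (d * Ring.inverse b - c * Ring.inverse a) *
        (d * Ring.inverse b - 1) ∧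
    Phi (!![1, 1, 1; 1, a, b; 1, c, d] : Matrix (Fin 3) (Fin 3) R) 2 2 =
      Ring.inverse (a - 1) * (b - a) * Ring.inverse b *
        Ring.inverse (d * Ring.inverse b - c * Ring.inverse a) *
        (c * Ring.inverse a - 1) ∧
    PhiInv (!![1, 1, 1; 1, a, b; 1, c, d] : Matrix (Fin 3) (Fin 3) R) 1 1 =
      (d - 1) * Ring.inverse (d - c) *
        (d * Ring.inverse b - c * Ring.inverse a) *
        Ring.inverse (d * Ring.inverse b - 1) := by
  set A := (!![1, 1, 1; 1, a, b; 1, c, d] : Matrix (Fin 3) (Fin 3) R) with hAdef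
  set B := Ring.inverse A with hBdef
  have hsub : allSquareSubInv A := hA.1.1
  have hJ2u : IsUnit (J2 A) := hA.1.2
  -- invertibility of A
  have hAu : IsUnit A := by
    have h := hsub 3 id id Function.injective_id Function.injective_id
    rwa [Matrix.submatrix_id_id] at h
  have hAB : A * B = 1 := by rw [hBdef]; exact Ring.mul_inverse_cancel A hAu
  have hBA : B * A = 1 := by rw [hBdef]; exact Ring.inverse_mul_cancel A hAu
  have hABl : (!![1, 1, 1; 1, a, b; 1, c, d] : Matrix (Fin 3) (Fin 3) R) * B = 1 := by
    rw [← hAdef]; exact hAB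
  have hBAl : B * (!![1, 1, 1; 1, a, b; 1, c, d] : Matrix (Fin 3) (Fin 3) R) = 1 := by
    rw [← hAdef]; exact hBA
  -- 1x1 submatrix units
  have ua : IsUnit a := by
    have h := hsub 1 ![1] ![1] (by decide) (by decide)
    have e : A.submatrix ![1] ![1] = !![a] := by
      rw [hAdef]; ext i j; fin_cases i; fin_cases j; rfl
    rw [e] at h; exact myUnit1x1 h
  have ub : IsUnit b := by
    have h := hsub 1 ![1] ![2] (by decide) (by decide)
    have e : A.submatrix ![1] ![2] = !![b] := by
      rw [hAdef]; ext i j; fin_cases i; fin_cases j; rfl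
    rw [e] at h; exact myUnit1x1 h
  have uc : IsUnit c := by
    have h := hsub 1 ![2] ![1] (by decide) (by decide)
    have e : A.submatrix ![2] ![1] = !![c] := by
      rw [hAdef]; ext i j; fin_cases i; fin_cases j; rfl
    rw [e] at h; exact myUnit1x1 h
  have ud : IsUnit d := by
    have h := hsub 1 ![2] ![2] (by decide) (by decide)
    have e : A.submatrix ![2] ![2] = !![d] := by
      rw [hAdef]; ext i j; fin_cases i; fin_cases j; rfl
    rw [e] at h; exact myUnit1x1 h
  -- 2x2 submatrix units
  have HM1 : IsUnit (!![a, b; c, d]) := by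
    have h := hsub 2 ![1,2] ![1,2] (by decide) (by decide)
    have e : A.submatrix ![1,2] ![1,2] = !![a, b; c, d] := by
      rw [hAdef]; ext i j; fin_cases i <;> fin_cases j <;> rfl
    rwa [e] at h
  have HM2 : IsUnit (!![(1:R), 1; c, d]) := by
    have h := hsub 2 ![0,2] ![1,2] (by decide) (by decide)
    have e : A.submatrix ![0,2] ![1,2] = !![(1:R), 1; c, d] := by
      rw [hAdef]; ext i j; fin_cases i <;> fin_cases j <;> rfl
    rwa [e] at h
  have HM3 : IsUnit (!![(1:R), 1; a, b]) := by
    have h := hsub 2 ![0,1] ![1,2] (by decide) (by decide)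
    have e : A.submatrix ![0,1] ![1,2] = !![(1:R), 1; a, b] := by
      rw [hAdef]; ext i j; fin_cases i <;> fin_cases j <;> rfl
    rwa [e] at h
  have HM4 : IsUnit (!![(1:R), b; 1, d]) := by
    have h := hsub 2 ![1,2] ![0,2] (by decide) (by decide)
    have e : A.submatrix ![1,2] ![0,2] = !![(1:R), b; 1, d] := by
      rw [hAdef]; ext i j; fin_cases i <;> fin_cases j <;> rfl
    rwa [e] at h
  have HM5 : IsUnit (!![(1:R), 1; 1, d]) := by
    have h := hsub 2 ![0,2] ![0,2] (by decide) (by decide)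
    have e : A.submatrix ![0,2] ![0,2] = !![(1:R), 1; 1, d] := by
      rw [hAdef]; ext i j; fin_cases i <;> fin_cases j <;> rfl
    rwa [e] at h
  have HM6 : IsUnit (!![(1:R), 1; 1, b]) := by
    have h := hsub 2 ![0,1] ![0,2] (by decide) (by decide)
    have e : A.submatrix ![0,1] ![0,2] = !![(1:R), 1; 1, b] := by
      rw [hAdef]; ext i j; fin_cases i <;> fin_cases j <;> rfl
    rwa [e] at h
  have HM7 : IsUnit (!![(1:R), a; 1, c]) := by
    have h := hsub 2 ![1,2] ![0,1] (by decide) (by decide)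
    have e : A.submatrix ![1,2] ![0,1] = !![(1:R), a; 1, c] := by
      rw [hAdef]; ext i j; fin_cases i <;> fin_cases j <;> rfl
    rwa [e] at h
  have HM8 : IsUnit (!![(1:R), 1; 1, c]) := by
    have h := hsub 2 ![0,2] ![0,1] (by decide) (by decide)
    have e : A.submatrix ![0,2] ![0,1] = !![(1:R), 1; 1, c] := by
      rw [hAdef]; ext i j; fin_cases i <;> fin_cases j <;> rfl
    rwa [e] at h
  have HM9 : IsUnit (!![(1:R), 1; 1, a]) := by
    have h := hsub 2 ![0,1] ![0,1] (by decide) (by decide)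
    have e : A.submatrix ![0,1] ![0,1] = !![(1:R), 1; 1, a] := by
      rw [hAdef]; ext i j; fin_cases i <;> fin_cases j <;> rfl
    rwa [e] at h
  have HM10 : IsUnit (!![b, a; d, c]) := by
    have h := hsub 2 ![1,2] ![2,1] (by decide) (by decide)
    have e : A.submatrix ![1,2] ![2,1] = !![b, a; d, c] := by
      rw [hAdef]; ext i j; fin_cases i <;> fin_cases j <;> rfl
    rwa [e] at h
  -- scalar units from Schur complements
  have ud1 : IsUnit (d - 1) := by
    have h := mySchur22 HM5 isUnit_one
    simpa [Ring.inverse_one] using h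
  have ua1 : IsUnit (a - 1) := by
    have h := mySchur22 HM9 isUnit_one
    simpa [Ring.inverse_one] using h
  have ub1 : IsUnit (b - 1) := by
    have h := mySchur22 HM6 isUnit_one
    simpa [Ring.inverse_one] using h
  have uc1 : IsUnit (c - 1) := by
    have h := mySchur22 HM8 isUnit_one
    simpa [Ring.inverse_one] using h
  have udc : IsUnit (d - c) := by
    have h := mySchur22 HM2 isUnit_one
    simpa [Ring.inverse_one] using h
  have udb : IsUnit (d - b) := by
    have h := mySchur22 HM4 isUnit_one
    simpa [Ring.inverse_one] using h
  have us : IsUnit (d - c * Ring.inverse a * b) := mySchur22 HM1 ua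
  have uw : IsUnit (c - d * Ring.inverse b * a) := mySchur22 HM10 ub
  -- cancellation facts
  have aR : a * Ring.inverse a = 1 := Ring.mul_inverse_cancel a ua
  have aL : Ring.inverse a * a = 1 := Ring.inverse_mul_cancel a ua
  have bR : b * Ring.inverse b = 1 := Ring.mul_inverse_cancel b ub
  have bL : Ring.inverse b * b = 1 := Ring.inverse_mul_cancel b ub
  have cR : c * Ring.inverse c = 1 := Ring.mul_inverse_cancel c uc
  have cL : Ring.inverse c * c = 1 := Ring.inverse_mul_cancel c uc
  have dR : d * Ring.inverse d = 1 := Ring.mul_inverse_cancel d ud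
  have dL : Ring.inverse d * d = 1 := Ring.inverse_mul_cancel d ud
  have d1R : (d - 1) * Ring.inverse (d - 1) = 1 := Ring.mul_inverse_cancel _ ud1
  have d1L : Ring.inverse (d - 1) * (d - 1) = 1 := Ring.inverse_mul_cancel _ ud1
  have a1L : Ring.inverse (a - 1) * (a - 1) = 1 := Ring.inverse_mul_cancel _ ua1
  have b1L : Ring.inverse (b - 1) * (b - 1) = 1 := Ring.inverse_mul_cancel _ ub1
  have c1L : Ring.inverse (c - 1) * (c - 1) = 1 := Ring.inverse_mul_cancel _ uc1
  have dcR : (d - c) * Ring.inverse (d - c) = 1 := Ring.mul_inverse_cancel _ udc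
  have dcL : Ring.inverse (d - c) * (d - c) = 1 := Ring.inverse_mul_cancel _ udc
  have dbR : (d - b) * Ring.inverse (d - b) = 1 := Ring.mul_inverse_cancel _ udb
  have dbL : Ring.inverse (d - b) * (d - b) = 1 := Ring.inverse_mul_cancel _ udb
  have sR : (d - c * Ring.inverse a * b) * Ring.inverse (d - c * Ring.inverse a * b) = 1 :=
    Ring.mul_inverse_cancel _ us
  have sL : Ring.inverse (d - c * Ring.inverse a * b) * (d - c * Ring.inverse a * b) = 1 :=
    Ring.inverse_mul_cancel _ us
  have wR : (c - d * Ring.inverse b * a) * Ring.inverse (c - d * Ring.inverse b * a) = 1 :=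
    Ring.mul_inverse_cancel _ uw
  have wL : Ring.inverse (c - d * Ring.inverse b * a) * (c - d * Ring.inverse b * a) = 1 :=
    Ring.inverse_mul_cancel _ uw
  -- units of the entries of B
  have u00 : IsUnit (B 0 0) := myEntryUnit hABl hBAl myE2 myE2 HM1
  have u01 : IsUnit (B 0 1) := myEntryUnit hABl hBAl myE1 myE2 HM2
  have u02 : IsUnit (B 0 2) := myEntryUnit hABl hBAl (Equiv.refl _) myE2 HM3
  have u10 : IsUnit (B 1 0) := myEntryUnit hABl hBAl myE2 myE1 HM4
  have u11 : IsUnit (B 1 1) := myEntryUnit hABl hBAl myE1 myE1 HM5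
  have u12 : IsUnit (B 1 2) := myEntryUnit hABl hBAl (Equiv.refl _) myE1 HM6
  have u20 : IsUnit (B 2 0) := myEntryUnit hABl hBAl myE2 (Equiv.refl _) HM7
  have u21 : IsUnit (B 2 1) := myEntryUnit hABl hBAl myE1 (Equiv.refl _) HM8
  have u22 : IsUnit (B 2 2) := myEntryUnit hABl hBAl (Equiv.refl _) (Equiv.refl _) HM9
  -- scalar equations from A * B = 1
  have p01 : B 0 1 + B 1 1 + B 2 1 = 0 := by
    have h := congrFun (congrFun hABl 0) 1
    simpa [Matrix.mul_apply, Fin.sum_univ_three, Matrix.one_apply, ← add_assoc] using h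
  have p21 : B 0 1 + c * B 1 1 + d * B 2 1 = 0 := by
    have h := congrFun (congrFun hABl 2) 1
    simpa [Matrix.mul_apply, Fin.sum_univ_three, Matrix.one_apply, ← add_assoc] using h
  have p02 : B 0 2 + B 1 2 + B 2 2 = 0 := by
    have h := congrFun (congrFun hABl 0) 2
    simpa [Matrix.mul_apply, Fin.sum_univ_three, Matrix.one_apply, ← add_assoc] using h
  have p12 : B 0 2 + a * B 1 2 + b * B 2 2 = 0 := by
    have h := congrFun (congrFun hABl 1) 2
    simpa [Matrix.mul_apply, Fin.sum_univ_three, Matrix.one_apply, ← add_assoc] using h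
  -- scalar equations from B * A = 1
  have q00 : B 0 0 + B 0 1 + B 0 2 = 1 := by
    have h := congrFun (congrFun hBAl 0) 0
    simpa [Matrix.mul_apply, Fin.sum_univ_three, Matrix.one_apply, ← add_assoc] using h
  have q01 : B 0 0 + B 0 1 * a + B 0 2 * c = 0 := by
    have h := congrFun (congrFun hBAl 0) 1
    simpa [Matrix.mul_apply, Fin.sum_univ_three, Matrix.one_apply, ← add_assoc] using h
  have q02 : B 0 0 + B 0 1 * b + B 0 2 * d = 0 := by
    have h := congrFun (congrFun hBAl 0) 2
    simpa [Matrix.mul_apply, Fin.sum_univ_three, Matrix.one_apply, ← add_assoc] using h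
  have q10 : B 1 0 + B 1 1 + B 1 2 = 0 := by
    have h := congrFun (congrFun hBAl 1) 0
    simpa [Matrix.mul_apply, Fin.sum_univ_three, Matrix.one_apply, ← add_assoc] using h
  have q11 : B 1 0 + B 1 1 * a + B 1 2 * c = 1 := by
    have h := congrFun (congrFun hBAl 1) 1
    simpa [Matrix.mul_apply, Fin.sum_univ_three, Matrix.one_apply, ← add_assoc] using h
  have q12 : B 1 0 + B 1 1 * b + B 1 2 * d = 0 := by
    have h := congrFun (congrFun hBAl 1) 2
    simpa [Matrix.mul_apply, Fin.sum_univ_three, Matrix.one_apply, ← add_assoc] using h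
  have q20 : B 2 0 + B 2 1 + B 2 2 = 0 := by
    have h := congrFun (congrFun hBAl 2) 0
    simpa [Matrix.mul_apply, Fin.sum_univ_three, Matrix.one_apply, ← add_assoc] using h
  have q21 : B 2 0 + B 2 1 * a + B 2 2 * c = 0 := by
    have h := congrFun (congrFun hBAl 2) 1
    simpa [Matrix.mul_apply, Fin.sum_univ_three, Matrix.one_apply, ← add_assoc] using h
  have q22 : B 2 0 + B 2 1 * b + B 2 2 * d = 1 := by
    have h := congrFun (congrFun hBAl 2) 2
    simpa [Matrix.mul_apply, Fin.sum_univ_three, Matrix.one_apply, ← add_assoc] using h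
  -- column-1 ratio identities
  have s11 : (c - 1) * B 1 1 + (d - 1) * B 2 1 = 0 := by
    have e : (c - 1) * B 1 1 + (d - 1) * B 2 1
        = (B 0 1 + c * B 1 1 + d * B 2 1) - (B 0 1 + B 1 1 + B 2 1) := by noncomm_ring
    rw [e, p21, p01, sub_zero]
  have s4 : B 0 1 = -(B 1 1) - B 2 1 := by
    have e : B 0 1 = (B 0 1 + B 1 1 + B 2 1) - B 1 1 - B 2 1 := by noncomm_ring
    rw [e, p01]; noncomm_ring
  have hr1 : B 0 1 = -((Ring.inverse (d - 1) * (d - c)) * B 1 1) := by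
    have s2 : (d - 1) * B 2 1 = -((c - 1) * B 1 1) := by
      have e : (d - 1) * B 2 1
          = ((c - 1) * B 1 1 + (d - 1) * B 2 1) - (c - 1) * B 1 1 := by noncomm_ring
      rw [e, s11, zero_sub]
    have s3 : B 2 1 = Ring.inverse (d - 1) * -((c - 1) * B 1 1) := myLeftCancel d1L s2
    have key : Ring.inverse (d - 1) * (d - c) = 1 - Ring.inverse (d - 1) * (c - 1) := by
      have e : Ring.inverse (d - 1) * (d - c)
          = Ring.inverse (d - 1) * (d - 1) - Ring.inverse (d - 1) * (c - 1) := by noncomm_ring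
      rw [e, d1L]
    rw [s4, s3, key]; noncomm_ring
  have hr2 : B 0 1 = (Ring.inverse (c - 1) * (d - c)) * B 2 1 := by
    have s2 : (c - 1) * B 1 1 = -((d - 1) * B 2 1) := by
      have e : (c - 1) * B 1 1
          = ((c - 1) * B 1 1 + (d - 1) * B 2 1) - (d - 1) * B 2 1 := by noncomm_ring
      rw [e, s11, zero_sub]
    have s3 : B 1 1 = Ring.inverse (c - 1) * -((d - 1) * B 2 1) := myLeftCancel c1L s2
    have key : Ring.inverse (c - 1) * (d - c) = Ring.inverse (c - 1) * (d - 1) - 1 := by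
      have e : Ring.inverse (c - 1) * (d - c)
          = Ring.inverse (c - 1) * (d - 1) - Ring.inverse (c - 1) * (c - 1) := by noncomm_ring
      rw [e, c1L]
    rw [s4, s3, key]; noncomm_ring
  -- column-2 ratio identities
  have s12 : (a - 1) * B 1 2 + (b - 1) * B 2 2 = 0 := by
    have e : (a - 1) * B 1 2 + (b - 1) * B 2 2
        = (B 0 2 + a * B 1 2 + b * B 2 2) - (B 0 2 + B 1 2 + B 2 2) := by noncomm_ring
    rw [e, p12, p02, sub_zero]
  have s5 : B 0 2 = -(B 1 2) - B 2 2 := by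
    have e : B 0 2 = (B 0 2 + B 1 2 + B 2 2) - B 1 2 - B 2 2 := by noncomm_ring
    rw [e, p02]; noncomm_ring
  have hr3 : B 0 2 = -((Ring.inverse (b - 1) * (b - a)) * B 1 2) := by
    have s2 : (b - 1) * B 2 2 = -((a - 1) * B 1 2) := by
      have e : (b - 1) * B 2 2
          = ((a - 1) * B 1 2 + (b - 1) * B 2 2) - (a - 1) * B 1 2 := by noncomm_ring
      rw [e, s12, zero_sub]
    have s3 : B 2 2 = Ring.inverse (b - 1) * -((a - 1) * B 1 2) := myLeftCancel b1L s2
    have key : Ring.inverse (b - 1) * (b - a) = 1 - Ring.inverse (b - 1) * (a - 1) := by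
      have e : Ring.inverse (b - 1) * (b - a)
          = Ring.inverse (b - 1) * (b - 1) - Ring.inverse (b - 1) * (a - 1) := by noncomm_ring
      rw [e, b1L]
    rw [s5, s3, key]; noncomm_ring
  have hr4 : B 0 2 = (Ring.inverse (a - 1) * (b - a)) * B 2 2 := by
    have s2 : (a - 1) * B 1 2 = -((b - 1) * B 2 2) := by
      have e : (a - 1) * B 1 2
          = ((a - 1) * B 1 2 + (b - 1) * B 2 2) - (b - 1) * B 2 2 := by noncomm_ring
      rw [e, s12, zero_sub]
    have s3 : B 1 2 = Ring.inverse (a - 1) * -((b - 1) * B 2 2) := myLeftCancel a1L s2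
    have key : Ring.inverse (a - 1) * (b - a) = Ring.inverse (a - 1) * (b - 1) - 1 := by
      have e : Ring.inverse (a - 1) * (b - a)
          = Ring.inverse (a - 1) * (b - 1) - Ring.inverse (a - 1) * (a - 1) := by noncomm_ring
      rw [e, a1L]
    rw [s5, s3, key]; noncomm_ring
  -- mu1 : row-1 / row-0 ratio
  set mu1 := B 1 0 * Ring.inverse (B 0 0) with hmu1def
  have hmu1B : mu1 * B 0 0 = B 1 0 := by rw [hmu1def, mul_assoc, Ring.inverse_mul_cancel _ u00, mul_one]
  set X1 := B 1 1 - mu1 * B 0 1 with hX1def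
  set Y1 := B 1 2 - mu1 * B 0 2 with hY1def
  have hxy0 : X1 + Y1 = -mu1 := by
    have e : X1 + Y1 = ((B 1 0 + B 1 1 + B 1 2) - B 1 0)
        - (mu1 * (B 0 0 + B 0 1 + B 0 2) - mu1 * B 0 0) := by rw [hX1def, hY1def]; noncomm_ring
    rw [e, q10, q00, hmu1B]; noncomm_ring
  have hxy1 : X1 * a + Y1 * c = 1 := by
    have e : X1 * a + Y1 * c = ((B 1 0 + B 1 1 * a + B 1 2 * c) - B 1 0)
        - (mu1 * (B 0 0 + B 0 1 * a + B 0 2 * c) - mu1 * B 0 0) := by rw [hX1def, hY1def]; noncomm_ring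
    rw [e, q11, q01, hmu1B]; noncomm_ring
  have hxy2 : X1 * b + Y1 * d = 0 := by
    have e : X1 * b + Y1 * d = ((B 1 0 + B 1 1 * b + B 1 2 * d) - B 1 0)
        - (mu1 * (B 0 0 + B 0 1 * b + B 0 2 * d) - mu1 * B 0 0) := by rw [hX1def, hY1def]; noncomm_ring
    rw [e, q12, q02, hmu1B]; noncomm_ring
  have hX1v : X1 = -(Y1 * d) * Ring.inverse b := by
    apply myRightCancel bR
    have e : X1 * b = (X1 * b + Y1 * d) - Y1 * d := by noncomm_ring
    rw [e, hxy2, zero_sub]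
  have hY1W : Y1 * (c - d * Ring.inverse b * a) = 1 := by
    have h := hxy1
    rw [hX1v] at h
    have e : Y1 * (c - d * Ring.inverse b * a)
        = -(Y1 * d) * Ring.inverse b * a + Y1 * c := by noncomm_ring
    rw [e]; exact h
  have hY1v : Y1 = Ring.inverse (c - d * Ring.inverse b * a) := by
    have e : Y1 = Y1 * ((c - d * Ring.inverse b * a)
        * Ring.inverse (c - d * Ring.inverse b * a)) := by rw [wR, mul_one]
    rw [e, ← mul_assoc, hY1W, one_mul]
  have hm1 : mu1 = Ring.inverse (c - d * Ring.inverse b * a) * (d * Ring.inverse b - 1) := by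
    have e : mu1 = -(X1 + Y1) := by rw [hxy0, neg_neg]
    rw [e, hX1v, hY1v]; noncomm_ring
  -- mu2 : row-2 / row-0 ratio
  set mu2 := B 2 0 * Ring.inverse (B 0 0) with hmu2def
  have hmu2B : mu2 * B 0 0 = B 2 0 := by rw [hmu2def, mul_assoc, Ring.inverse_mul_cancel _ u00, mul_one]
  set X2 := B 2 1 - mu2 * B 0 1 with hX2def
  set Y2 := B 2 2 - mu2 * B 0 2 with hY2def
  have hxy0' : X2 + Y2 = -mu2 := by
    have e : X2 + Y2 = ((B 2 0 + B 2 1 + B 2 2) - B 2 0)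
        - (mu2 * (B 0 0 + B 0 1 + B 0 2) - mu2 * B 0 0) := by rw [hX2def, hY2def]; noncomm_ring
    rw [e, q20, q00, hmu2B]; noncomm_ring
  have hxy1' : X2 * a + Y2 * c = 0 := by
    have e : X2 * a + Y2 * c = ((B 2 0 + B 2 1 * a + B 2 2 * c) - B 2 0)
        - (mu2 * (B 0 0 + B 0 1 * a + B 0 2 * c) - mu2 * B 0 0) := by rw [hX2def, hY2def]; noncomm_ring
    rw [e, q21, q01, hmu2B]; noncomm_ring
  have hxy2' : X2 * b + Y2 * d = 1 := by
    have e : X2 * b + Y2 * d = ((B 2 0 + B 2 1 * b + B 2 2 * d) - B 2 0)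
        - (mu2 * (B 0 0 + B 0 1 * b + B 0 2 * d) - mu2 * B 0 0) := by rw [hX2def, hY2def]; noncomm_ring
    rw [e, q22, q02, hmu2B]; noncomm_ring
  have hX2v : X2 = -(Y2 * c) * Ring.inverse a := by
    apply myRightCancel aR
    have e : X2 * a = (X2 * a + Y2 * c) - Y2 * c := by noncomm_ring
    rw [e, hxy1', zero_sub]
  have hY2s : Y2 * (d - c * Ring.inverse a * b) = 1 := by
    have h := hxy2'
    rw [hX2v] at h
    have e : Y2 * (d - c * Ring.inverse a * b)
        = -(Y2 * c) * Ring.inverse a * b + Y2 * d := by noncomm_ring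
    rw [e]; exact h
  have hY2v : Y2 = Ring.inverse (d - c * Ring.inverse a * b) := by
    have e : Y2 = Y2 * ((d - c * Ring.inverse a * b)
        * Ring.inverse (d - c * Ring.inverse a * b)) := by rw [sR, mul_one]
    rw [e, ← mul_assoc, hY2s, one_mul]
  have hm2 : mu2 = Ring.inverse (d - c * Ring.inverse a * b) * (c * Ring.inverse a - 1) := by
    have e : mu2 = -(X2 + Y2) := by rw [hxy0', neg_neg]
    rw [e, hX2v, hY2v]; noncomm_ring
  -- facts about V = d b⁻¹ - c a⁻¹
  have hVfact : (d - c * Ring.inverse a * b) * Ring.inverse b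
      = d * Ring.inverse b - c * Ring.inverse a := by
    have e : (d - c * Ring.inverse a * b) * Ring.inverse b
        = d * Ring.inverse b - (c * Ring.inverse a) * (b * Ring.inverse b) := by noncomm_ring
    rw [e, bR, mul_one]
  have hVinv : Ring.inverse (d * Ring.inverse b - c * Ring.inverse a)
      = -(a * Ring.inverse (c - d * Ring.inverse b * a)) := by
    apply myRinvEq
    · calc (d * Ring.inverse b - c * Ring.inverse a)
            * -(a * Ring.inverse (c - d * Ring.inverse b * a))
          = -((d * Ring.inverse b) * (a * Ring.inverse (c - d * Ring.inverse b * a)))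
            + c * ((Ring.inverse a * a) * Ring.inverse (c - d * Ring.inverse b * a)) := by noncomm_ring
        _ = -((d * Ring.inverse b) * (a * Ring.inverse (c - d * Ring.inverse b * a)))
            + c * Ring.inverse (c - d * Ring.inverse b * a) := by rw [aL, one_mul]
        _ = (c - d * Ring.inverse b * a) * Ring.inverse (c - d * Ring.inverse b * a) := by noncomm_ring
        _ = 1 := wR
    · have hWfact : (c - d * Ring.inverse b * a) * Ring.inverse a
          = c * Ring.inverse a - d * Ring.inverse b := by
        have e : (c - d * Ring.inverse b * a) * Ring.inverse a
            = c * Ring.inverse a - (d * Ring.inverse b) * (a * Ring.inverse a) := by noncomm_ring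
        rw [e, aR, mul_one]
      calc -(a * Ring.inverse (c - d * Ring.inverse b * a))
            * (d * Ring.inverse b - c * Ring.inverse a)
          = a * (Ring.inverse (c - d * Ring.inverse b * a)
            * (c * Ring.inverse a - d * Ring.inverse b)) := by noncomm_ring
        _ = a * (Ring.inverse (c - d * Ring.inverse b * a)
            * ((c - d * Ring.inverse b * a) * Ring.inverse a)) := by rw [hWfact]
        _ = a * ((Ring.inverse (c - d * Ring.inverse b * a)
            * (c - d * Ring.inverse b * a)) * Ring.inverse a) := by noncomm_ring
        _ = a * Ring.inverse a := by rw [wL, one_mul]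
        _ = 1 := aR
  have hVinv2 : Ring.inverse (d * Ring.inverse b - c * Ring.inverse a)
      = b * Ring.inverse (d - c * Ring.inverse a * b) := by
    apply myRinvEq
    · calc (d * Ring.inverse b - c * Ring.inverse a)
            * (b * Ring.inverse (d - c * Ring.inverse a * b))
          = (d * (Ring.inverse b * b)) * Ring.inverse (d - c * Ring.inverse a * b)
            - (c * Ring.inverse a * b) * Ring.inverse (d - c * Ring.inverse a * b) := by noncomm_ring
        _ = d * Ring.inverse (d - c * Ring.inverse a * b)
            - (c * Ring.inverse a * b) * Ring.inverse (d - c * Ring.inverse a * b) := by rw [bL, mul_one]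
        _ = (d - c * Ring.inverse a * b) * Ring.inverse (d - c * Ring.inverse a * b) := by noncomm_ring
        _ = 1 := sR
    · calc (b * Ring.inverse (d - c * Ring.inverse a * b))
            * (d * Ring.inverse b - c * Ring.inverse a)
          = (b * Ring.inverse (d - c * Ring.inverse a * b))
            * ((d - c * Ring.inverse a * b) * Ring.inverse b) := by rw [hVfact]
        _ = b * ((Ring.inverse (d - c * Ring.inverse a * b)
            * (d - c * Ring.inverse a * b)) * Ring.inverse b) := by noncomm_ring
        _ = b * Ring.inverse b := by rw [sL, one_mul]
        _ = 1 := bR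
  -- the matrix J2 A and its inverse C
  have hJ2A : J2 A = !![1, 1, 1; 1, Ring.inverse a, Ring.inverse c;
      1, Ring.inverse b, Ring.inverse d] := by
    rw [hAdef]
    ext i j
    fin_cases i <;> fin_cases j <;>
      simp [J2, Ring.inverse_one, Matrix.vecHead, Matrix.vecTail]
  set C := Ring.inverse (J2 A) with hCdef
  have hJC : J2 A * C = 1 := by rw [hCdef]; exact Ring.mul_inverse_cancel _ hJ2u
  have hCJ : C * J2 A = 1 := by rw [hCdef]; exact Ring.inverse_mul_cancel _ hJ2u
  have hMLC : (!![1, 1, 1; 1, Ring.inverse a, Ring.inverse c;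
      1, Ring.inverse b, Ring.inverse d] : Matrix (Fin 3) (Fin 3) R) * C = 1 := by
    rw [← hJ2A]; exact hJC
  have hCML : C * (!![1, 1, 1; 1, Ring.inverse a, Ring.inverse c;
      1, Ring.inverse b, Ring.inverse d] : Matrix (Fin 3) (Fin 3) R) = 1 := by
    rw [← hJ2A]; exact hCJ
  -- units of the needed entries of C
  have uHC00 : IsUnit (!![Ring.inverse a, Ring.inverse c; Ring.inverse b, Ring.inverse d]) := by
    apply myIsUnit22' (myRinvUnit ud)
    have hdd2 : Ring.inverse (Ring.inverse d) = d := myRinvEq dL dR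
    have key : Ring.inverse a - Ring.inverse c * Ring.inverse (Ring.inverse d) * Ring.inverse b
        = -(Ring.inverse c * ((d - c * Ring.inverse a * b) * Ring.inverse b)) := by
      rw [hdd2, hVfact]
      have e1 : -(Ring.inverse c * (d * Ring.inverse b - c * Ring.inverse a))
          = (Ring.inverse c * c) * Ring.inverse a - Ring.inverse c * d * Ring.inverse b := by noncomm_ring
      rw [e1, cL, one_mul]
    rw [key]
    exact ((myRinvUnit uc).mul (us.mul (myRinvUnit ub))).neg
  have uHC01 : IsUnit (!![(1:R), 1; Ring.inverse b, Ring.inverse d]) := by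
    apply myIsUnit22 isUnit_one
    have e0 : Ring.inverse d - Ring.inverse b * Ring.inverse (1:R) * 1
        = Ring.inverse d - Ring.inverse b := by rw [Ring.inverse_one, mul_one, mul_one]
    rw [e0]
    have ubd : IsUnit (b - d) := by have h := udb.neg; simpa [neg_sub] using h
    have e : Ring.inverse b * ((b - d) * Ring.inverse d) = Ring.inverse d - Ring.inverse b := by
      have e2 : Ring.inverse b * ((b - d) * Ring.inverse d)
          = (Ring.inverse b * b) * Ring.inverse d - Ring.inverse b * (d * Ring.inverse d) := by noncomm_ring
      rw [e2, bL, dR, one_mul, mul_one]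
    rw [← e]; exact (myRinvUnit ub).mul (ubd.mul (myRinvUnit ud))
  have uHC10 : IsUnit (!![(1:R), Ring.inverse c; 1, Ring.inverse d]) := by
    apply myIsUnit22 isUnit_one
    have e0 : Ring.inverse d - 1 * Ring.inverse (1:R) * Ring.inverse c
        = Ring.inverse d - Ring.inverse c := by rw [Ring.inverse_one, mul_one, one_mul]
    rw [e0]
    have ucd : IsUnit (c - d) := by have h := udc.neg; simpa [neg_sub] using h
    have e : Ring.inverse c * ((c - d) * Ring.inverse d) = Ring.inverse d - Ring.inverse c := by
      have e2 : Ring.inverse c * ((c - d) * Ring.inverse d)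
          = (Ring.inverse c * c) * Ring.inverse d - Ring.inverse c * (d * Ring.inverse d) := by noncomm_ring
      rw [e2, cL, dR, one_mul, mul_one]
    rw [← e]; exact (myRinvUnit uc).mul (ucd.mul (myRinvUnit ud))
  have uHC11 : IsUnit (!![(1:R), 1; 1, Ring.inverse d]) := by
    apply myIsUnit22 isUnit_one
    have e0 : Ring.inverse d - 1 * Ring.inverse (1:R) * 1 = Ring.inverse d - 1 := by rw [Ring.inverse_one, mul_one, mul_one]
    rw [e0]
    have u1d : IsUnit ((1:R) - d) := by have h := ud1.neg; simpa [neg_sub] using h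
    have e : Ring.inverse d * ((1:R) - d) = Ring.inverse d - 1 := by
      have e2 : Ring.inverse d * ((1:R) - d)
          = Ring.inverse d - Ring.inverse d * d := by noncomm_ring
      rw [e2, dL]
    rw [← e]; exact (myRinvUnit ud).mul u1d
  have uC00 : IsUnit (C 0 0) := myEntryUnit hMLC hCML myE2 myE2 uHC00
  have uC01 : IsUnit (C 0 1) := myEntryUnit hMLC hCML myE1 myE2 uHC01
  have uC10 : IsUnit (C 1 0) := myEntryUnit hMLC hCML myE2 myE1 uHC10
  have uC11 : IsUnit (C 1 1) := myEntryUnit hMLC hCML myE1 myE1 uHC11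
  -- scalar equations from (J2 A) * C = 1
  have g00 : C 0 0 + C 1 0 + C 2 0 = 1 := by
    have h := congrFun (congrFun hMLC 0) 0
    simpa [Matrix.mul_apply, Fin.sum_univ_three, Matrix.one_apply, ← add_assoc] using h
  have g10 : C 0 0 + Ring.inverse a * C 1 0 + Ring.inverse c * C 2 0 = 0 := by
    have h := congrFun (congrFun hMLC 1) 0
    simpa [Matrix.mul_apply, Fin.sum_univ_three, Matrix.one_apply, ← add_assoc] using h
  have g20 : C 0 0 + Ring.inverse b * C 1 0 + Ring.inverse d * C 2 0 = 0 := by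
    have h := congrFun (congrFun hMLC 2) 0
    simpa [Matrix.mul_apply, Fin.sum_univ_three, Matrix.one_apply, ← add_assoc] using h
  have g01 : C 0 1 + C 1 1 + C 2 1 = 0 := by
    have h := congrFun (congrFun hMLC 0) 1
    simpa [Matrix.mul_apply, Fin.sum_univ_three, Matrix.one_apply, ← add_assoc] using h
  have g11 : C 0 1 + Ring.inverse a * C 1 1 + Ring.inverse c * C 2 1 = 1 := by
    have h := congrFun (congrFun hMLC 1) 1
    simpa [Matrix.mul_apply, Fin.sum_univ_three, Matrix.one_apply, ← add_assoc] using h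
  have g21 : C 0 1 + Ring.inverse b * C 1 1 + Ring.inverse d * C 2 1 = 0 := by
    have h := congrFun (congrFun hMLC 2) 1
    simpa [Matrix.mul_apply, Fin.sum_univ_three, Matrix.one_apply, ← add_assoc] using h
  -- rho : column-0 / column-1 ratio of C
  set rho := Ring.inverse (C 1 1) * C 1 0 with hrhodef
  have urho : IsUnit rho := by rw [hrhodef]; exact (myRinvUnit uC11).mul uC10
  have hrhoC : C 1 1 * rho = C 1 0 := by rw [hrhodef, ← mul_assoc, Ring.mul_inverse_cancel _ uC11, one_mul]
  set Xr := C 0 0 - C 0 1 * rho with hXrdef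
  set Yr := C 2 0 - C 2 1 * rho with hYrdef
  have hrxy0 : Xr + Yr = 1 := by
    have e : Xr + Yr = ((C 0 0 + C 1 0 + C 2 0) - C 1 0)
        - ((C 0 1 + C 1 1 + C 2 1) * rho - C 1 1 * rho) := by rw [hXrdef, hYrdef]; noncomm_ring
    rw [e, g00, g01, hrhoC]; noncomm_ring
  have hrxy2 : Xr + Ring.inverse d * Yr = 0 := by
    have e : Xr + Ring.inverse d * Yr
        = ((C 0 0 + Ring.inverse b * C 1 0 + Ring.inverse d * C 2 0) - Ring.inverse b * C 1 0)
        - ((C 0 1 + Ring.inverse b * C 1 1 + Ring.inverse d * C 2 1) * rho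
          - Ring.inverse b * (C 1 1 * rho)) := by rw [hXrdef, hYrdef]; noncomm_ring
    rw [e, g20, g21, hrhoC]; noncomm_ring
  have hrxy1 : Xr + Ring.inverse c * Yr = -rho := by
    have e : Xr + Ring.inverse c * Yr
        = ((C 0 0 + Ring.inverse a * C 1 0 + Ring.inverse c * C 2 0) - Ring.inverse a * C 1 0)
        - ((C 0 1 + Ring.inverse a * C 1 1 + Ring.inverse c * C 2 1) * rho
          - Ring.inverse a * (C 1 1 * rho)) := by rw [hXrdef, hYrdef]; noncomm_ring
    rw [e, g10, g11, hrhoC]; noncomm_ring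
  have hXrv : Xr = -(Ring.inverse d * Yr) := by
    have e : Xr = (Xr + Ring.inverse d * Yr) - Ring.inverse d * Yr := by noncomm_ring
    rw [e, hrxy2, zero_sub]
  have hE1 : Ring.inverse d * (d - 1) = 1 - Ring.inverse d := by
    have e : Ring.inverse d * (d - 1) = Ring.inverse d * d - Ring.inverse d := by noncomm_ring
    rw [e, dL]
  have uE1 : IsUnit ((1:R) - Ring.inverse d) := by
    rw [← hE1]; exact (myRinvUnit ud).mul ud1
  have hYrE : (1 - Ring.inverse d) * Yr = 1 := by
    have e : (1 - Ring.inverse d) * Yr = (Xr + Yr) - (Xr + Ring.inverse d * Yr) := by noncomm_ring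
    rw [e, hrxy0, hrxy2, sub_zero]
  have hYrv : Yr = Ring.inverse (1 - Ring.inverse d) := by
    have h := myLeftCancel (Ring.inverse_mul_cancel _ uE1) hYrE
    rw [h, mul_one]
  have hrhov : rho = (Ring.inverse d - Ring.inverse c) * Ring.inverse (1 - Ring.inverse d) := by
    have e : rho = -(Xr + Ring.inverse c * Yr) := by rw [hrxy1, neg_neg]
    rw [e, hXrv, hYrv]; noncomm_ring
  -- tau : column-1 / column-0 ratio of C
  set tau := Ring.inverse (C 0 0) * C 0 1 with htaudef
  have utau : IsUnit tau := by rw [htaudef]; exact (myRinvUnit uC00).mul uC01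
  have htauC : C 0 0 * tau = C 0 1 := by rw [htaudef, ← mul_assoc, Ring.mul_inverse_cancel _ uC00, one_mul]
  set Xt := C 1 1 - C 1 0 * tau with hXtdef
  set Yt := C 2 1 - C 2 0 * tau with hYtdef
  have htxy0 : Xt + Yt = -tau := by
    have e : Xt + Yt = ((C 0 1 + C 1 1 + C 2 1) - C 0 1)
        - ((C 0 0 + C 1 0 + C 2 0) * tau - C 0 0 * tau) := by rw [hXtdef, hYtdef]; noncomm_ring
    rw [e, g01, g00, htauC]; noncomm_ring
  have htxy1 : Ring.inverse a * Xt + Ring.inverse c * Yt = 1 := by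
    have e : Ring.inverse a * Xt + Ring.inverse c * Yt
        = ((C 0 1 + Ring.inverse a * C 1 1 + Ring.inverse c * C 2 1) - C 0 1)
        - ((C 0 0 + Ring.inverse a * C 1 0 + Ring.inverse c * C 2 0) * tau - C 0 0 * tau) := by rw [hXtdef, hYtdef]; noncomm_ring
    rw [e, g11, g10, htauC]; noncomm_ring
  have htxy2 : Ring.inverse b * Xt + Ring.inverse d * Yt = 0 := by
    have e : Ring.inverse b * Xt + Ring.inverse d * Yt
        = ((C 0 1 + Ring.inverse b * C 1 1 + Ring.inverse d * C 2 1) - C 0 1)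
        - ((C 0 0 + Ring.inverse b * C 1 0 + Ring.inverse d * C 2 0) * tau - C 0 0 * tau) := by rw [hXtdef, hYtdef]; noncomm_ring
    rw [e, g21, g20, htauC]; noncomm_ring
  have hXtv : Xt = b * -(Ring.inverse d * Yt) := by
    apply myLeftCancel bR
    have e : Ring.inverse b * Xt = (Ring.inverse b * Xt + Ring.inverse d * Yt)
        - Ring.inverse d * Yt := by noncomm_ring
    rw [e, htxy2, zero_sub]
  have hK : Ring.inverse c * ((d - c * Ring.inverse a * b) * Ring.inverse d)
      = Ring.inverse c - Ring.inverse a * b * Ring.inverse d := by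
    have e : Ring.inverse c * ((d - c * Ring.inverse a * b) * Ring.inverse d)
        = Ring.inverse c * (d * Ring.inverse d)
          - (Ring.inverse c * c) * (Ring.inverse a * b * Ring.inverse d) := by noncomm_ring
    rw [e, dR, cL, mul_one, one_mul]
  have uK : IsUnit (Ring.inverse c - Ring.inverse a * b * Ring.inverse d) := by
    rw [← hK]; exact (myRinvUnit uc).mul (us.mul (myRinvUnit ud))
  have KR : (Ring.inverse c - Ring.inverse a * b * Ring.inverse d)
      * Ring.inverse (Ring.inverse c - Ring.inverse a * b * Ring.inverse d) = 1 :=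
    Ring.mul_inverse_cancel _ uK
  have KL : Ring.inverse (Ring.inverse c - Ring.inverse a * b * Ring.inverse d)
      * (Ring.inverse c - Ring.inverse a * b * Ring.inverse d) = 1 :=
    Ring.inverse_mul_cancel _ uK
  have hKY : (Ring.inverse c - Ring.inverse a * b * Ring.inverse d) * Yt = 1 := by
    have h := htxy1
    rw [hXtv] at h
    have e : (Ring.inverse c - Ring.inverse a * b * Ring.inverse d) * Yt
        = Ring.inverse a * (b * -(Ring.inverse d * Yt)) + Ring.inverse c * Yt := by noncomm_ring
    rw [e]; exact h
  have hYtv : Yt = Ring.inverse (Ring.inverse c - Ring.inverse a * b * Ring.inverse d) := by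
    have h := myLeftCancel KL hKY
    rw [h, mul_one]
  have htauv : tau = (b * Ring.inverse d - 1)
      * Ring.inverse (Ring.inverse c - Ring.inverse a * b * Ring.inverse d) := by
    have e : tau = -(Xt + Yt) := by rw [htxy0, neg_neg]
    rw [e, hXtv, hYtv]; noncomm_ring
  -- inverses of rho and tau
  have hiE1v : Ring.inverse (1 - Ring.inverse d) = Ring.inverse (d - 1) * d := by
    apply myRinvEq
    · rw [← hE1]
      calc Ring.inverse d * (d - 1) * (Ring.inverse (d - 1) * d)
          = Ring.inverse d * (((d - 1) * Ring.inverse (d - 1)) * d) := by noncomm_ring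
        _ = Ring.inverse d * d := by rw [d1R, one_mul]
        _ = 1 := dL
    · rw [← hE1]
      calc Ring.inverse (d - 1) * d * (Ring.inverse d * (d - 1))
          = Ring.inverse (d - 1) * ((d * Ring.inverse d) * (d - 1)) := by noncomm_ring
        _ = Ring.inverse (d - 1) * (d - 1) := by rw [dR, one_mul]
        _ = 1 := d1L
  have hrhov2 : rho = (Ring.inverse d - Ring.inverse c) * (Ring.inverse (d - 1) * d) := by rw [hrhov, hiE1v]
  have hidc : Ring.inverse c * ((c - d) * Ring.inverse d)
      = Ring.inverse d - Ring.inverse c := by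
    have e : Ring.inverse c * ((c - d) * Ring.inverse d)
        = (Ring.inverse c * c) * Ring.inverse d - Ring.inverse c * (d * Ring.inverse d) := by noncomm_ring
    rw [e, cL, dR, one_mul, mul_one]
  have hcdneg : (c - d) * Ring.inverse (d - c) = -1 := by
    have e : (c - d) * Ring.inverse (d - c) = -((d - c) * Ring.inverse (d - c)) := by noncomm_ring
    rw [e, dcR]
  have hdcneg : Ring.inverse (d - c) * (c - d) = -1 := by
    have e : Ring.inverse (d - c) * (c - d) = -(Ring.inverse (d - c) * (d - c)) := by noncomm_ring
    rw [e, dcL]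
  have hdd : d * (d - 1) = (d - 1) * d := by noncomm_ring
  have hcomm : (d - 1) * Ring.inverse d = Ring.inverse d * (d - 1) := by
    have e1 : (d - 1) * Ring.inverse d = d * Ring.inverse d - Ring.inverse d := by noncomm_ring
    have e2 : Ring.inverse d * (d - 1) = Ring.inverse d * d - Ring.inverse d := by noncomm_ring
    rw [e1, e2, dR, dL]
  have hcid : c * (Ring.inverse d - Ring.inverse c) = (c - d) * Ring.inverse d := by
    have e1 : c * (Ring.inverse d - Ring.inverse c)
        = c * Ring.inverse d - c * Ring.inverse c := by noncomm_ring
    have e2 : (c - d) * Ring.inverse d = c * Ring.inverse d - d * Ring.inverse d := by noncomm_ring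
    rw [e1, e2, cR, dR]
  have hmid : (Ring.inverse (d - 1) * d) * ((d - 1) * (Ring.inverse (d - c) * c))
      = d * (Ring.inverse (d - c) * c) := by
    calc (Ring.inverse (d - 1) * d) * ((d - 1) * (Ring.inverse (d - c) * c))
        = Ring.inverse (d - 1) * ((d * (d - 1)) * (Ring.inverse (d - c) * c)) := by noncomm_ring
      _ = Ring.inverse (d - 1) * (((d - 1) * d) * (Ring.inverse (d - c) * c)) := by rw [hdd]
      _ = (Ring.inverse (d - 1) * (d - 1)) * (d * (Ring.inverse (d - c) * c)) := by noncomm_ring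
      _ = d * (Ring.inverse (d - c) * c) := by rw [d1L, one_mul]
  have hirho : Ring.inverse rho = -((d - 1) * (Ring.inverse (d - c) * c)) := by
    apply myRinvEq
    · calc rho * -((d - 1) * (Ring.inverse (d - c) * c))
          = -(((Ring.inverse d - Ring.inverse c) * (Ring.inverse (d - 1) * d))
            * ((d - 1) * (Ring.inverse (d - c) * c))) := by rw [hrhov2]; noncomm_ring
        _ = -((Ring.inverse d - Ring.inverse c)
            * ((Ring.inverse (d - 1) * d) * ((d - 1) * (Ring.inverse (d - c) * c)))) := by noncomm_ring
        _ = -((Ring.inverse d - Ring.inverse c) * (d * (Ring.inverse (d - c) * c))) := by rw [hmid]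
        _ = -((Ring.inverse c * ((c - d) * Ring.inverse d))
            * (d * (Ring.inverse (d - c) * c))) := by rw [hidc]
        _ = -(Ring.inverse c * ((c - d) * ((Ring.inverse d * d)
            * (Ring.inverse (d - c) * c)))) := by noncomm_ring
        _ = -(Ring.inverse c * ((c - d) * (Ring.inverse (d - c) * c))) := by rw [dL, one_mul]
        _ = -(Ring.inverse c * (((c - d) * Ring.inverse (d - c)) * c)) := by noncomm_ring
        _ = -(Ring.inverse c * ((-1 : R) * c)) := by rw [hcdneg]
        _ = Ring.inverse c * c := by noncomm_ring
        _ = 1 := cL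
    · calc -((d - 1) * (Ring.inverse (d - c) * c)) * rho
          = -((d - 1) * ((Ring.inverse (d - c) * (c * (Ring.inverse d - Ring.inverse c)))
            * (Ring.inverse (d - 1) * d))) := by rw [hrhov2]; noncomm_ring
        _ = -((d - 1) * ((Ring.inverse (d - c) * ((c - d) * Ring.inverse d))
            * (Ring.inverse (d - 1) * d))) := by rw [hcid]
        _ = -((d - 1) * (((Ring.inverse (d - c) * (c - d)) * Ring.inverse d)
            * (Ring.inverse (d - 1) * d))) := by noncomm_ring
        _ = -((d - 1) * (((-1 : R) * Ring.inverse d) * (Ring.inverse (d - 1) * d))) := by rw [hdcneg]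
        _ = ((d - 1) * Ring.inverse d) * (Ring.inverse (d - 1) * d) := by noncomm_ring
        _ = (Ring.inverse d * (d - 1)) * (Ring.inverse (d - 1) * d) := by rw [hcomm]
        _ = Ring.inverse d * (((d - 1) * Ring.inverse (d - 1)) * d) := by noncomm_ring
        _ = Ring.inverse d * d := by rw [d1R, one_mul]
        _ = 1 := dL
  have hbidd : (b - d) * Ring.inverse d = b * Ring.inverse d - 1 := by
    have e : (b - d) * Ring.inverse d = b * Ring.inverse d - d * Ring.inverse d := by noncomm_ring
    rw [e, dR]
  have hbdneg : (b - d) * Ring.inverse (d - b) = -1 := by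
    have e : (b - d) * Ring.inverse (d - b) = -((d - b) * Ring.inverse (d - b)) := by noncomm_ring
    rw [e, dbR]
  have hdbneg1 : Ring.inverse (d - b) * (b - d) = -1 := by
    have e : Ring.inverse (d - b) * (b - d) = -(Ring.inverse (d - b) * (d - b)) := by noncomm_ring
    rw [e, dbL]
  have hitau : Ring.inverse tau = -((Ring.inverse c - Ring.inverse a * b * Ring.inverse d)
      * (d * Ring.inverse (d - b))) := by
    apply myRinvEq
    · calc tau * -((Ring.inverse c - Ring.inverse a * b * Ring.inverse d)
            * (d * Ring.inverse (d - b)))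
          = -((b * Ring.inverse d - 1)
            * ((Ring.inverse (Ring.inverse c - Ring.inverse a * b * Ring.inverse d)
              * (Ring.inverse c - Ring.inverse a * b * Ring.inverse d))
              * (d * Ring.inverse (d - b)))) := by rw [htauv]; noncomm_ring
        _ = -((b * Ring.inverse d - 1) * (d * Ring.inverse (d - b))) := by rw [KL, one_mul]
        _ = -(((b - d) * Ring.inverse d) * (d * Ring.inverse (d - b))) := by rw [hbidd]
        _ = -((b - d) * ((Ring.inverse d * d) * Ring.inverse (d - b))) := by noncomm_ring
        _ = -((b - d) * Ring.inverse (d - b)) := by rw [dL, one_mul]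
        _ = 1 := by rw [hbdneg, neg_neg]
    · calc -((Ring.inverse c - Ring.inverse a * b * Ring.inverse d)
            * (d * Ring.inverse (d - b))) * tau
          = -((Ring.inverse c - Ring.inverse a * b * Ring.inverse d)
            * ((d * Ring.inverse (d - b)) * (((b - d) * Ring.inverse d)
              * Ring.inverse (Ring.inverse c - Ring.inverse a * b * Ring.inverse d)))) := by rw [htauv, ← hbidd]; noncomm_ring
        _ = -((Ring.inverse c - Ring.inverse a * b * Ring.inverse d)
            * ((d * (Ring.inverse (d - b) * (b - d))) * (Ring.inverse d
              * Ring.inverse (Ring.inverse c - Ring.inverse a * b * Ring.inverse d)))) := by noncomm_ring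
        _ = -((Ring.inverse c - Ring.inverse a * b * Ring.inverse d)
            * ((d * (-1 : R)) * (Ring.inverse d
              * Ring.inverse (Ring.inverse c - Ring.inverse a * b * Ring.inverse d)))) := by rw [hdbneg1]
        _ = (Ring.inverse c - Ring.inverse a * b * Ring.inverse d)
            * ((d * Ring.inverse d)
              * Ring.inverse (Ring.inverse c - Ring.inverse a * b * Ring.inverse d)) := by noncomm_ring
        _ = (Ring.inverse c - Ring.inverse a * b * Ring.inverse d)
            * Ring.inverse (Ring.inverse c - Ring.inverse a * b * Ring.inverse d) := by rw [dR, one_mul]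
        _ = 1 := KR
  have hinvdib1 : Ring.inverse (d * Ring.inverse b - 1) = b * Ring.inverse (d - b) := by
    have hdbfact : (d - b) * Ring.inverse b = d * Ring.inverse b - 1 := by
      have e : (d - b) * Ring.inverse b = d * Ring.inverse b - b * Ring.inverse b := by noncomm_ring
      rw [e, bR]
    apply myRinvEq
    · calc (d * Ring.inverse b - 1) * (b * Ring.inverse (d - b))
          = ((d - b) * Ring.inverse b) * (b * Ring.inverse (d - b)) := by rw [hdbfact]
        _ = (d - b) * ((Ring.inverse b * b) * Ring.inverse (d - b)) := by noncomm_ring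
        _ = (d - b) * Ring.inverse (d - b) := by rw [bL, one_mul]
        _ = 1 := dbR
    · calc (b * Ring.inverse (d - b)) * (d * Ring.inverse b - 1)
          = (b * Ring.inverse (d - b)) * ((d - b) * Ring.inverse b) := by rw [hdbfact]
        _ = b * ((Ring.inverse (d - b) * (d - b)) * Ring.inverse b) := by noncomm_ring
        _ = b * Ring.inverse b := by rw [dbL, one_mul]
        _ = 1 := bR
  have hcK : c * (Ring.inverse c - Ring.inverse a * b * Ring.inverse d)
      = (d - c * Ring.inverse a * b) * Ring.inverse d := by
    have e1 : c * (Ring.inverse c - Ring.inverse a * b * Ring.inverse d)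
        = c * Ring.inverse c - c * (Ring.inverse a * b * Ring.inverse d) := by noncomm_ring
    have e2 : (d - c * Ring.inverse a * b) * Ring.inverse d
        = d * Ring.inverse d - c * (Ring.inverse a * b * Ring.inverse d) := by noncomm_ring
    rw [e1, e2, cR, dR]
  -- the five closed formulas
  refine ⟨?_, ?_, ?_, ?_, ?_⟩
  · show Ring.inverse (B 0 0 * Ring.inverse (B 1 0) * B 1 1 * Ring.inverse (B 0 1)) = _
    rw [myInv4 (Ring.mul_inverse_cancel _ u00) (Ring.inverse_mul_cancel _ u00)
      (Ring.mul_inverse_cancel _ u10) (Ring.inverse_mul_cancel _ u10)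
      (Ring.mul_inverse_cancel _ u11) (Ring.inverse_mul_cancel _ u11)
      (Ring.mul_inverse_cancel _ u01) (Ring.inverse_mul_cancel _ u01), hVinv]
    have lam : B 0 1 * Ring.inverse (B 1 1) = -(Ring.inverse (d - 1) * (d - c)) := by
      rw [hr1]
      calc -((Ring.inverse (d - 1) * (d - c)) * B 1 1) * Ring.inverse (B 1 1)
          = -((Ring.inverse (d - 1) * (d - c)) * (B 1 1 * Ring.inverse (B 1 1))) := by noncomm_ring
        _ = -(Ring.inverse (d - 1) * (d - c)) := by rw [Ring.mul_inverse_cancel _ u11, mul_one]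
    have step : B 0 1 * Ring.inverse (B 1 1) * B 1 0 * Ring.inverse (B 0 0)
        = (B 0 1 * Ring.inverse (B 1 1)) * (B 1 0 * Ring.inverse (B 0 0)) := by noncomm_ring
    rw [step, lam, ← hmu1def, hm1]
    calc -(Ring.inverse (d - 1) * (d - c))
          * (Ring.inverse (c - d * Ring.inverse b * a) * (d * Ring.inverse b - 1))
        = -((Ring.inverse (d - 1) * (d - c)) * ((Ring.inverse a * a)
          * (Ring.inverse (c - d * Ring.inverse b * a) * (d * Ring.inverse b - 1)))) := by rw [aL]; noncomm_ring
      _ = Ring.inverse (d - 1) * (d - c) * Ring.inverse a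
          * -(a * Ring.inverse (c - d * Ring.inverse b * a)) * (d * Ring.inverse b - 1) := by noncomm_ring
  · show Ring.inverse (B 0 0 * Ring.inverse (B 2 0) * B 2 1 * Ring.inverse (B 0 1)) = _
    rw [myInv4 (Ring.mul_inverse_cancel _ u00) (Ring.inverse_mul_cancel _ u00)
      (Ring.mul_inverse_cancel _ u20) (Ring.inverse_mul_cancel _ u20)
      (Ring.mul_inverse_cancel _ u21) (Ring.inverse_mul_cancel _ u21)
      (Ring.mul_inverse_cancel _ u01) (Ring.inverse_mul_cancel _ u01), hVinv2]
    have lam : B 0 1 * Ring.inverse (B 2 1) = Ring.inverse (c - 1) * (d - c) := by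
      rw [hr2]
      calc (Ring.inverse (c - 1) * (d - c)) * B 2 1 * Ring.inverse (B 2 1)
          = (Ring.inverse (c - 1) * (d - c)) * (B 2 1 * Ring.inverse (B 2 1)) := by noncomm_ring
        _ = Ring.inverse (c - 1) * (d - c) := by rw [Ring.mul_inverse_cancel _ u21, mul_one]
    have step : B 0 1 * Ring.inverse (B 2 1) * B 2 0 * Ring.inverse (B 0 0)
        = (B 0 1 * Ring.inverse (B 2 1)) * (B 2 0 * Ring.inverse (B 0 0)) := by noncomm_ring
    rw [step, lam, ← hmu2def, hm2]
    have fin : Ring.inverse (c - 1) * (d - c) * Ring.inverse b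
        * (b * Ring.inverse (d - c * Ring.inverse a * b)) * (c * Ring.inverse a - 1)
        = Ring.inverse (c - 1) * (d - c) * (Ring.inverse (d - c * Ring.inverse a * b)
          * (c * Ring.inverse a - 1)) := by
      calc Ring.inverse (c - 1) * (d - c) * Ring.inverse b
            * (b * Ring.inverse (d - c * Ring.inverse a * b)) * (c * Ring.inverse a - 1)
          = (Ring.inverse (c - 1) * (d - c)) * ((Ring.inverse b * b)
            * (Ring.inverse (d - c * Ring.inverse a * b) * (c * Ring.inverse a - 1))) := by noncomm_ring
        _ = Ring.inverse (c - 1) * (d - c) * (Ring.inverse (d - c * Ring.inverse a * b)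
            * (c * Ring.inverse a - 1)) := by rw [bL, one_mul]
    rw [fin]
  · show Ring.inverse (B 0 0 * Ring.inverse (B 1 0) * B 1 2 * Ring.inverse (B 0 2)) = _
    rw [myInv4 (Ring.mul_inverse_cancel _ u00) (Ring.inverse_mul_cancel _ u00)
      (Ring.mul_inverse_cancel _ u10) (Ring.inverse_mul_cancel _ u10)
      (Ring.mul_inverse_cancel _ u12) (Ring.inverse_mul_cancel _ u12)
      (Ring.mul_inverse_cancel _ u02) (Ring.inverse_mul_cancel _ u02), hVinv]
    have lam : B 0 2 * Ring.inverse (B 1 2) = -(Ring.inverse (b - 1) * (b - a)) := by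
      rw [hr3]
      calc -((Ring.inverse (b - 1) * (b - a)) * B 1 2) * Ring.inverse (B 1 2)
          = -((Ring.inverse (b - 1) * (b - a)) * (B 1 2 * Ring.inverse (B 1 2))) := by noncomm_ring
        _ = -(Ring.inverse (b - 1) * (b - a)) := by rw [Ring.mul_inverse_cancel _ u12, mul_one]
    have step : B 0 2 * Ring.inverse (B 1 2) * B 1 0 * Ring.inverse (B 0 0)
        = (B 0 2 * Ring.inverse (B 1 2)) * (B 1 0 * Ring.inverse (B 0 0)) := by noncomm_ring
    rw [step, lam, ← hmu1def, hm1]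
    calc -(Ring.inverse (b - 1) * (b - a))
          * (Ring.inverse (c - d * Ring.inverse b * a) * (d * Ring.inverse b - 1))
        = -((Ring.inverse (b - 1) * (b - a)) * ((Ring.inverse a * a)
          * (Ring.inverse (c - d * Ring.inverse b * a) * (d * Ring.inverse b - 1)))) := by rw [aL]; noncomm_ring
      _ = Ring.inverse (b - 1) * (b - a) * Ring.inverse a
          * -(a * Ring.inverse (c - d * Ring.inverse b * a)) * (d * Ring.inverse b - 1) := by noncomm_ring
  · show Ring.inverse (B 0 0 * Ring.inverse (B 2 0) * B 2 2 * Ring.inverse (B 0 2)) = _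
    rw [myInv4 (Ring.mul_inverse_cancel _ u00) (Ring.inverse_mul_cancel _ u00)
      (Ring.mul_inverse_cancel _ u20) (Ring.inverse_mul_cancel _ u20)
      (Ring.mul_inverse_cancel _ u22) (Ring.inverse_mul_cancel _ u22)
      (Ring.mul_inverse_cancel _ u02) (Ring.inverse_mul_cancel _ u02), hVinv2]
    have lam : B 0 2 * Ring.inverse (B 2 2) = Ring.inverse (a - 1) * (b - a) := by
      rw [hr4]
      calc (Ring.inverse (a - 1) * (b - a)) * B 2 2 * Ring.inverse (B 2 2)
          = (Ring.inverse (a - 1) * (b - a)) * (B 2 2 * Ring.inverse (B 2 2)) := by noncomm_ring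
        _ = Ring.inverse (a - 1) * (b - a) := by rw [Ring.mul_inverse_cancel _ u22, mul_one]
    have step : B 0 2 * Ring.inverse (B 2 2) * B 2 0 * Ring.inverse (B 0 0)
        = (B 0 2 * Ring.inverse (B 2 2)) * (B 2 0 * Ring.inverse (B 0 0)) := by noncomm_ring
    rw [step, lam, ← hmu2def, hm2]
    have fin : Ring.inverse (a - 1) * (b - a) * Ring.inverse b
        * (b * Ring.inverse (d - c * Ring.inverse a * b)) * (c * Ring.inverse a - 1)
        = Ring.inverse (a - 1) * (b - a) * (Ring.inverse (d - c * Ring.inverse a * b)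
          * (c * Ring.inverse a - 1)) := by
      calc Ring.inverse (a - 1) * (b - a) * Ring.inverse b
            * (b * Ring.inverse (d - c * Ring.inverse a * b)) * (c * Ring.inverse a - 1)
          = (Ring.inverse (a - 1) * (b - a)) * ((Ring.inverse b * b)
            * (Ring.inverse (d - c * Ring.inverse a * b) * (c * Ring.inverse a - 1))) := by noncomm_ring
        _ = Ring.inverse (a - 1) * (b - a) * (Ring.inverse (d - c * Ring.inverse a * b)
            * (c * Ring.inverse a - 1)) := by rw [bL, one_mul]
    rw [fin]
  · show Ring.inverse (C 1 0) * C 1 1 * Ring.inverse (C 0 1) * C 0 0 = _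
    have hiC10 : Ring.inverse (C 1 0) = Ring.inverse rho * Ring.inverse (C 1 1) := by
      apply myRinvEq
      · rw [← hrhoC]
        calc C 1 1 * rho * (Ring.inverse rho * Ring.inverse (C 1 1))
            = C 1 1 * ((rho * Ring.inverse rho) * Ring.inverse (C 1 1)) := by noncomm_ring
          _ = C 1 1 * Ring.inverse (C 1 1) := by rw [Ring.mul_inverse_cancel _ urho, one_mul]
          _ = 1 := Ring.mul_inverse_cancel _ uC11
      · rw [← hrhoC]
        calc Ring.inverse rho * Ring.inverse (C 1 1) * (C 1 1 * rho)
            = Ring.inverse rho * ((Ring.inverse (C 1 1) * C 1 1) * rho) := by noncomm_ring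
          _ = Ring.inverse rho * rho := by rw [Ring.inverse_mul_cancel _ uC11, one_mul]
          _ = 1 := Ring.inverse_mul_cancel _ urho
    have hiC01 : Ring.inverse (C 0 1) = Ring.inverse tau * Ring.inverse (C 0 0) := by
      apply myRinvEq
      · rw [← htauC]
        calc C 0 0 * tau * (Ring.inverse tau * Ring.inverse (C 0 0))
            = C 0 0 * ((tau * Ring.inverse tau) * Ring.inverse (C 0 0)) := by noncomm_ring
          _ = C 0 0 * Ring.inverse (C 0 0) := by rw [Ring.mul_inverse_cancel _ utau, one_mul]
          _ = 1 := Ring.mul_inverse_cancel _ uC00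
      · rw [← htauC]
        calc Ring.inverse tau * Ring.inverse (C 0 0) * (C 0 0 * tau)
            = Ring.inverse tau * ((Ring.inverse (C 0 0) * C 0 0) * tau) := by noncomm_ring
          _ = Ring.inverse tau * tau := by rw [Ring.inverse_mul_cancel _ uC00, one_mul]
          _ = 1 := Ring.inverse_mul_cancel _ utau
    rw [hiC10, hiC01]
    have el : Ring.inverse rho * Ring.inverse (C 1 1) * C 1 1
        * (Ring.inverse tau * Ring.inverse (C 0 0)) * C 0 0
        = Ring.inverse rho * Ring.inverse tau := by
      calc Ring.inverse rho * Ring.inverse (C 1 1) * C 1 1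
            * (Ring.inverse tau * Ring.inverse (C 0 0)) * C 0 0
          = Ring.inverse rho * ((Ring.inverse (C 1 1) * C 1 1)
            * (Ring.inverse tau * (Ring.inverse (C 0 0) * C 0 0))) := by noncomm_ring
        _ = Ring.inverse rho * (1 * (Ring.inverse tau * 1)) := by rw [Ring.inverse_mul_cancel _ uC11, Ring.inverse_mul_cancel _ uC00]
        _ = Ring.inverse rho * Ring.inverse tau := by noncomm_ring
    rw [el, hirho, hitau, hinvdib1, ← hVfact]
    calc -((d - 1) * (Ring.inverse (d - c) * c))
          * -((Ring.inverse c - Ring.inverse a * b * Ring.inverse d)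
            * (d * Ring.inverse (d - b)))
        = (d - 1) * (Ring.inverse (d - c)
          * ((c * (Ring.inverse c - Ring.inverse a * b * Ring.inverse d))
            * (d * Ring.inverse (d - b)))) := by noncomm_ring
      _ = (d - 1) * (Ring.inverse (d - c)
          * (((d - c * Ring.inverse a * b) * Ring.inverse d)
            * (d * Ring.inverse (d - b)))) := by rw [hcK]
      _ = (d - 1) * (Ring.inverse (d - c) * ((d - c * Ring.inverse a * b)
          * ((Ring.inverse d * d) * Ring.inverse (d - b)))) := by noncomm_ring
      _ = (d - 1) * (Ring.inverse (d - c) * ((d - c * Ring.inverse a * b)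
          * ((Ring.inverse b * b) * Ring.inverse (d - b)))) := by rw [dL, bL]
      _ = (d - 1) * Ring.inverse (d - c) * ((d - c * Ring.inverse a * b) * Ring.inverse b)
          * (b * Ring.inverse (d - b)) := by noncomm_ring
end
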